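/- arXiv:1901.08423 — 4 statements merged into one kernel-verified Lean document; each statement's English description precedes it below -/
import Mathlib

section
/- Let S be a finite set of primes, let s be a complex number, and let m be a natural number. Then (Σ_{p∈S} p^{−s})^m / m! = Σ_{n} g(n) n^{−s}, where the sum on the right runs over positive integers n all of whose prime factors lie in S and with Ω(n) = m. -/
open scoped BigOperators
open ArithmeticFunction
open scoped ArithmeticFunction.Omega
open scoped Classical

noncomputable section

/-- The multiplicative function `g` with `g(p^r) = 1/r!`. -/
def gfun (n : ℕ) : ℝ := ∏ p ∈ n.primeFactors, (1:ℝ)/(Nat.factorial (n.factorization p))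

lemma natCast_pow_cpow (p k : ℕ) (s : ℂ) : ((p ^ k : ℕ) : ℂ) ^ s = ((p:ℂ) ^ s) ^ k := by
  induction k with
  | zero => simp
  | succ k ih => rw [pow_succ, Nat.cast_mul, Complex.natCast_mul_natCast_cpow, ih, pow_succ]

lemma cpow_prod (S : Finset ℕ) (k : ℕ → ℕ) (s : ℂ) :
    ((∏ p ∈ S, p ^ k p : ℕ) : ℂ) ^ s = ∏ p ∈ S, ((p:ℂ) ^ s) ^ k p := by
  classical
  induction S using Finset.induction with
  | empty => simp
  | @insert a t ha ih =>
    rw [Finset.prod_insert ha, Finset.prod_insert ha, Nat.cast_mul,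
      Complex.natCast_mul_natCast_cpow, natCast_pow_cpow, ih]

lemma fact_eval {S : Finset ℕ} (hS : ∀ p ∈ S, p.Prime) (k : ℕ → ℕ) (q : ℕ) :
    (∏ p ∈ S, p ^ k p).factorization q = if q ∈ S then k q else 0 := by
  classical
  rw [Nat.factorization_prod (fun p hp => pow_ne_zero _ (hS p hp).ne_zero)]
  rw [Finset.sum_apply']
  have : ∀ p ∈ S, ((p ^ k p).factorization) q = if p = q then k p else 0 := by
    intro p hp
    rw [(hS p hp).factorization_pow, Finsupp.single_apply]
  rw [Finset.sum_congr rfl this, Finset.sum_ite_eq' S q k]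

lemma prod_pos' {S : Finset ℕ} (hS : ∀ p ∈ S, p.Prime) (k : ℕ → ℕ) :
    0 < ∏ p ∈ S, p ^ k p :=
  Finset.prod_pos fun p hp => pow_pos (hS p hp).pos _

lemma primeFactors_sub {S : Finset ℕ} (hS : ∀ p ∈ S, p.Prime) (k : ℕ → ℕ) :
    (∏ p ∈ S, p ^ k p).primeFactors ⊆ S := by
  intro q hq
  have h1 : (∏ p ∈ S, p ^ k p).factorization q ≠ 0 := by
    rwa [← Finsupp.mem_support_iff, Nat.support_factorization]
  by_contra hqS
  rw [fact_eval hS, if_neg hqS] at h1; exact h1 rfl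

lemma Omega_prod {S : Finset ℕ} (hS : ∀ p ∈ S, p.Prime) (k : ℕ → ℕ) :
    Ω (∏ p ∈ S, p ^ k p) = ∑ p ∈ S, k p := by
  classical
  induction S using Finset.induction with
  | empty => simp
  | @insert a t ha ih =>
    have hpa := hS a (Finset.mem_insert_self a t)
    have ht : ∀ p ∈ t, p.Prime := fun p hp => hS p (Finset.mem_insert_of_mem hp)
    rw [Finset.prod_insert ha, Finset.sum_insert ha,
      cardFactors_mul (pow_ne_zero _ hpa.ne_zero) (prod_pos' ht k).ne',
      cardFactors_apply_prime_pow hpa, ih ht]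

lemma gfun_prod {S : Finset ℕ} (hS : ∀ p ∈ S, p.Prime) (k : ℕ → ℕ) :
    gfun (∏ p ∈ S, p ^ k p) = ∏ p ∈ S, (1:ℝ) / (Nat.factorial (k p)) := by
  classical
  unfold gfun
  set N := ∏ p ∈ S, p ^ k p with hN
  rw [Finset.prod_subset (primeFactors_sub hS k)]
  · exact Finset.prod_congr rfl fun p hp => by rw [fact_eval hS, if_pos hp]
  · intro p hp hnp
    have : N.factorization p = 0 := by
      rw [← Finsupp.notMem_support_iff, Nat.support_factorization]; exact hnp
    rw [this]; simp

lemma rep_eq {S : Finset ℕ} {n : ℕ} (hn : n ≠ 0) (hsub : n.primeFactors ⊆ S) :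
    ∏ p ∈ S, p ^ n.factorization p = n := by
  rw [← Finset.prod_subset hsub (fun p _ hp => by
    rw [← Nat.support_factorization] at hp
    rw [Finsupp.notMem_support_iff.mp hp, pow_zero]), ← Nat.support_factorization]
  exact Nat.factorization_prod_pow_eq_self hn

/-- For a finite set `S` of primes, a complex `s` and `m : ℕ`:
`(Σ_{p∈S} p^{-s})^m / m! = Σ_{n : p ∣ n → p ∈ S, Ω(n) = m} g(n) n^{-s}`. -/
theorem prime_sum_pow_eq (S : Finset ℕ) (hS : ∀ p ∈ S, p.Prime) (s : ℂ) (m : ℕ) :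
    (∑ p ∈ S, (p:ℂ)^(-s))^m / (Nat.factorial m : ℂ)
      = ∑' n : ℕ,
          if 0 < n ∧ (∀ p : ℕ, p.Prime → p ∣ n → p ∈ S) ∧ Ω n = m
          then (gfun n : ℂ) * (n:ℂ)^(-s) else 0 := by
  classical
  set F : ℕ → ℂ := fun n => if 0 < n ∧ (∀ p : ℕ, p.Prime → p ∣ n → p ∈ S) ∧ Ω n = m
      then (gfun n : ℂ) * (n:ℂ)^(-s) else 0 with hF
  set N : (ℕ → ℕ) → ℕ := fun k => ∏ p ∈ S, p ^ k p with hNdef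
  have hinj : ∀ k ∈ Finset.piAntidiag S m, ∀ k' ∈ Finset.piAntidiag S m,
      N k = N k' → k = k' := by
    intro k hk k' hk' h
    rw [Finset.mem_piAntidiag] at hk hk'
    funext q
    by_cases hq : q ∈ S
    · have := congrArg (fun n => n.factorization q) h
      simpa [hNdef, fact_eval hS, hq] using this
    · have h1 : k q = 0 := by by_contra hc; exact hq (hk.2 q hc)
      have h2 : k' q = 0 := by by_contra hc; exact hq (hk'.2 q hc)
      rw [h1, h2]
  have hsupp : ∀ n ∉ (Finset.piAntidiag S m).image N, F n = 0 := by
    intro n hn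
    rw [hF]
    simp only
    rw [if_neg]
    rintro ⟨hn0, hdvd, hΩ⟩
    apply hn
    rw [Finset.mem_image]
    have hsub : n.primeFactors ⊆ S := fun q hq =>
      hdvd q (Nat.prime_of_mem_primeFactors hq) (Nat.dvd_of_mem_primeFactors hq)
    have hrep : N (fun p => n.factorization p) = n := rep_eq hn0.ne' hsub
    refine ⟨fun p => n.factorization p, ?_, hrep⟩
    rw [Finset.mem_piAntidiag]
    refine ⟨?_, ?_⟩
    · have := Omega_prod hS (fun p => n.factorization p)
      rw [hNdef] at hrep
      simp only at hrep
      rw [hrep, hΩ] at this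
      exact this.symm
    · intro p hp
      have : p ∈ n.factorization.support := Finsupp.mem_support_iff.mpr hp
      rw [Nat.support_factorization] at this
      exact hsub this
  rw [tsum_eq_sum hsupp, Finset.sum_image hinj, Finset.sum_pow_eq_sum_piAntidiag,
    Finset.sum_div]
  refine Finset.sum_congr rfl fun k hk => ?_
  rw [Finset.mem_piAntidiag] at hk
  have hcond : 0 < N k ∧ (∀ p : ℕ, p.Prime → p ∣ N k → p ∈ S) ∧ Ω (N k) = m := by
    refine ⟨prod_pos' hS k, ?_, by rw [hNdef]; simp only; rw [Omega_prod hS, hk.1]⟩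
    intro p hp hdvd
    exact primeFactors_sub hS k (Nat.mem_primeFactors.mpr ⟨hp, hdvd, (prod_pos' hS k).ne'⟩)
  rw [hF]
  simp only [if_pos hcond]
  rw [hNdef]
  simp only
  rw [gfun_prod hS, cpow_prod]
  push_cast
  have hfac : ((∏ p ∈ S, (k p).factorial : ℕ) : ℂ) * (Nat.multinomial S k : ℂ)
      = (Nat.factorial m : ℂ) := by
    rw [← Nat.cast_mul, Nat.multinomial_spec, hk.1]
  have hprodne : ((∏ p ∈ S, ((k p).factorial : ℂ))) ≠ 0 :=
    Finset.prod_ne_zero_iff.mpr fun p _ => Nat.cast_ne_zero.mpr (Nat.factorial_ne_zero _)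
  have hmne : (Nat.factorial m : ℂ) ≠ 0 := Nat.cast_ne_zero.mpr (Nat.factorial_ne_zero _)
  push_cast at hfac
  have h1 : (∏ p ∈ S, ((1:ℂ)/((k p).factorial))) = (Nat.multinomial S k : ℂ) / (Nat.factorial m : ℂ) := by
    rw [Finset.prod_div_distrib, Finset.prod_const_one, div_eq_div_iff hprodne hmne,
      one_mul, ← hfac]
    ring
  rw [h1]
  ring
end
end

section
/- Let P ≤ Q be real numbers with P ≥ 2, let r be a natural number, and set 𝑃 = Σ_{P ≤ p < Q} 1/p (sum over primes). Then Σ_{n} (r! g(n))²/n ≤ r! · 𝑃^r, where the sum runs over positive integers n all of whose prime factors p satisfy P ≤ p < Q and with Ω(n) = r. -/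
open scoped BigOperators
open ArithmeticFunction
open ArithmeticFunction.Omega
open scoped Classical

noncomputable section

/-- `𝑃 = Σ_{P ≤ p < Q} 1/p`, the sum over primes `p` in `[P, Q)`. -/
def primeRecipSum (P Q : ℝ) : ℝ :=
  ∑ p ∈ (Finset.range (⌈Q⌉₊ + 1)).filter (fun p : ℕ => p.Prime ∧ P ≤ (p:ℝ) ∧ (p:ℝ) < Q),
    (1:ℝ)/p

lemma cardFactors_eq_sum_factorization (n : ℕ) :
    Ω n = ∑ p ∈ n.primeFactors, n.factorization p := by
  simp only [← Nat.primeFactorsList_count_eq, cardFactors_apply, Nat.primeFactors,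
    ← Multiset.coe_count, ← Multiset.coe_card, ← Multiset.toFinset_sum_count_eq]
  rfl

/-- For `2 ≤ P ≤ Q` and `r : ℕ`:
`Σ_{n : p ∣ n → P ≤ p < Q, Ω(n) = r} (r! g(n))²/n ≤ r! 𝑃^r`. -/
theorem g_squared_sum_bound (P Q : ℝ) (hP : 2 ≤ P) (hPQ : P ≤ Q) (r : ℕ) :
    (∑' n : ℕ,
        if 0 < n ∧ (∀ p : ℕ, p.Prime → p ∣ n → (P ≤ (p:ℝ) ∧ (p:ℝ) < Q)) ∧ Ω n = r
        then ((Nat.factorial r : ℝ) * gfun n)^2 / (n:ℝ) else 0)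
      ≤ (Nat.factorial r : ℝ) * (primeRecipSum P Q)^r := by
  set T : Finset ℕ :=
    (Finset.range (⌈Q⌉₊ + 1)).filter (fun p : ℕ => p.Prime ∧ P ≤ (p:ℝ) ∧ (p:ℝ) < Q) with hT
  have hPRS : primeRecipSum P Q = ∑ p ∈ T, (1:ℝ)/p := rfl
  have hPRS0 : 0 ≤ primeRecipSum P Q := by
    rw [hPRS]
    exact Finset.sum_nonneg fun p _ => by positivity
  have hrfact : (0:ℝ) < (Nat.factorial r : ℝ) := by positivity
  have hrhs0 : 0 ≤ (Nat.factorial r : ℝ) * (primeRecipSum P Q)^r := by positivity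
  refine tsum_le_of_sum_le' hrhs0 fun s => ?_
  rw [← Finset.sum_filter]
  set A : Finset ℕ := s.filter
    (fun n => 0 < n ∧ (∀ p : ℕ, p.Prime → p ∣ n → (P ≤ (p:ℝ) ∧ (p:ℝ) < Q)) ∧ Ω n = r) with hA
  -- the target function on exponent vectors
  set h : (ℕ → ℕ) → ℝ :=
    fun k => (Nat.factorial r : ℝ) *
      ((Nat.multinomial T k : ℝ) * ∏ p ∈ T, ((1:ℝ)/p)^(k p)) with hh
  have hh0 : ∀ k, 0 ≤ h k := by
    intro k
    apply mul_nonneg hrfact.le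
    apply mul_nonneg (by positivity)
    exact Finset.prod_nonneg fun p _ => by positivity
  -- facts about members of A
  have hmemA : ∀ n ∈ A, 0 < n ∧
      (∀ p : ℕ, p.Prime → p ∣ n → (P ≤ (p:ℝ) ∧ (p:ℝ) < Q)) ∧ Ω n = r := by
    intro n hn
    exact (Finset.mem_filter.mp hn).2
  have hsubT : ∀ n ∈ A, n.primeFactors ⊆ T := by
    intro n hn p hp
    obtain ⟨hn0, hall, hΩ⟩ := hmemA n hn
    obtain ⟨hpp, hpd, -⟩ := Nat.mem_primeFactors.mp hp
    obtain ⟨h1, h2⟩ := hall p hpp hpd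
    rw [hT]
    refine Finset.mem_filter.mpr ⟨Finset.mem_range.mpr ?_, hpp, h1, h2⟩
    exact lt_trans (Nat.lt_ceil.mpr h2) (Nat.lt_succ_self _)
  have hmaps : ∀ n ∈ A, (fun p => n.factorization p) ∈ Finset.piAntidiag T r := by
    intro n hn
    obtain ⟨hn0, hall, hΩ⟩ := hmemA n hn
    rw [Finset.mem_piAntidiag]
    constructor
    · rw [← hΩ, _root_.cardFactors_eq_sum_factorization]
      exact (Finset.sum_subset (hsubT n hn) fun p _ hp => by
        simpa using Finsupp.notMem_support_iff.mp (by
          rwa [Nat.support_factorization])).symm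
    · intro p hp
      exact hsubT n hn (by
        rw [← Nat.support_factorization]
        exact Finsupp.mem_support_iff.mpr hp)
  -- key pointwise computation
  have hpt : ∀ n ∈ A,
      ((Nat.factorial r : ℝ) * gfun n)^2 / (n:ℝ) ≤ h (fun p => n.factorization p) := by
    intro n hn
    obtain ⟨hn0, hall, hΩ⟩ := hmemA n hn
    have hsub := hsubT n hn
    have hzero : ∀ p ∈ T, p ∉ n.primeFactors → n.factorization p = 0 := by
      intro p _ hp
      simpa using Finsupp.notMem_support_iff.mp (by rwa [Nat.support_factorization])
    -- the product of p^(α p) over T equals n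
    have hprod : ∏ p ∈ T, (p:ℝ)^(n.factorization p) = (n:ℝ) := by
      rw [← Finset.prod_subset hsub (fun p hp hnp => by rw [hzero p hp hnp, pow_zero])]
      have := Nat.factorization_prod_pow_eq_self hn0.ne'
      rw [Finsupp.prod, Nat.support_factorization] at this
      exact_mod_cast this
    have hn0R : (0:ℝ) < (n:ℝ) := by exact_mod_cast hn0
    have hprodinv : ∏ p ∈ T, ((1:ℝ)/p)^(n.factorization p) = 1 / (n:ℝ) := by
      simp only [div_pow, one_pow]
      rw [Finset.prod_div_distrib, Finset.prod_const_one, hprod]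
    -- multinomial = r! * gfun n
    have hfac : ∏ p ∈ T, Nat.factorial (n.factorization p) ≠ 0 :=
      Finset.prod_ne_zero_iff.mpr fun p _ => Nat.factorial_ne_zero _
    have hspec : ((∏ p ∈ T, Nat.factorial (n.factorization p)) *
        Nat.multinomial T (fun p => n.factorization p) : ℕ) = Nat.factorial r := by
      rw [Nat.multinomial_spec]
      congr 1
      rw [← hΩ, _root_.cardFactors_eq_sum_factorization]
      exact (Finset.sum_subset hsub fun p hp hnp => hzero p hp hnp).symm
    have hgf : gfun n = ∏ p ∈ T, (1:ℝ)/(Nat.factorial (n.factorization p)) := by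
      rw [gfun]
      refine Finset.prod_subset hsub fun p hp hnp => ?_
      rw [hzero p hp hnp]
      simp
    have hmult : (Nat.multinomial T (fun p => n.factorization p) : ℝ)
        = (Nat.factorial r : ℝ) * gfun n := by
      have := congrArg (fun m : ℕ => (m : ℝ)) hspec
      push_cast at this
      rw [hgf]
      have hfacR : (∏ p ∈ T, (Nat.factorial (n.factorization p) : ℝ)) ≠ 0 := by
        exact_mod_cast hfac
      field_simp
      rw [← this, Finset.prod_div_distrib, Finset.prod_const_one, mul_comm, ← mul_assoc,
        one_div_mul_cancel hfacR, one_mul]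
    -- multinomial ≤ r!
    have hmle : (Nat.multinomial T (fun p => n.factorization p) : ℝ)
        ≤ (Nat.factorial r : ℝ) := by
      have : Nat.multinomial T (fun p => n.factorization p) ≤ Nat.factorial r := by
        refine Nat.le_of_dvd (Nat.factorial_pos r)
          ⟨∏ p ∈ T, Nat.factorial (n.factorization p), by rw [← hspec]; ring⟩
      exact_mod_cast this
    rw [hh]
    dsimp only
    rw [hprodinv, ← hmult]
    set m : ℝ := (Nat.multinomial T (fun p => n.factorization p) : ℝ)
    have hm0 : 0 ≤ m := Nat.cast_nonneg _
    calc m^2 / (n:ℝ) = m * m * (1/(n:ℝ)) := by rw [sq]; field_simp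
      _ ≤ (Nat.factorial r : ℝ) * m * (1/(n:ℝ)) := by
          have : (0:ℝ) ≤ 1/(n:ℝ) := by positivity
          gcongr
      _ = (Nat.factorial r : ℝ) * (m * (1/(n:ℝ))) := by ring
  -- injectivity
  have hinj : Set.InjOn (fun n : ℕ => (fun p => n.factorization p)) A := by
    intro a ha b hb hab
    have ha0 := (hmemA a ha).1
    have hb0 := (hmemA b hb).1
    refine Nat.factorization_inj ha0.ne' hb0.ne' ?_
    exact DFunLike.coe_injective (funext fun p => congrFun hab p)
  calc ∑ n ∈ A, ((Nat.factorial r : ℝ) * gfun n)^2 / (n:ℝ)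
      ≤ ∑ n ∈ A, h (fun p => n.factorization p) := Finset.sum_le_sum hpt
    _ = ∑ k ∈ A.image (fun n : ℕ => (fun p => n.factorization p)), h k :=
        (Finset.sum_image (fun a ha b hb => hinj ha hb)).symm
    _ ≤ ∑ k ∈ Finset.piAntidiag T r, h k := by
        refine Finset.sum_le_sum_of_subset_of_nonneg ?_ (fun k _ _ => hh0 k)
        intro k hk
        obtain ⟨n, hn, rfl⟩ := Finset.mem_image.mp hk
        exact hmaps n hn
    _ = (Nat.factorial r : ℝ) * (primeRecipSum P Q)^r := by
        rw [← Finset.mul_sum]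
        congr 1
        rw [hPRS, Finset.sum_pow_eq_sum_piAntidiag]
end
end

section
/- There is an absolute constant C such that for all T ≥ 10, all complex numbers z_1, z_2, z_3, z_4 with |z_j| = 3^j/log T for 1 ≤ j ≤ 4, and all positive integers n all of whose prime factors are at most T^{10^{−8}}, one has |B_{z1,z2,z3,z4}(n)| ≤ C · 3^{Ω(n)}. -/
open scoped BigOperators
open ArithmeticFunction
open scoped ArithmeticFunction.Omega
open scoped Classical
open scoped Nat

set_option maxHeartbeats 2000000

noncomputable section

/-- `σ_{z₁,z₂}(n) = Σ_{n₁n₂ = n} n₁^{-z₁} n₂^{-z₂}`. -/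
def sigz (z₁ z₂ : ℂ) (n : ℕ) : ℂ :=
  ∑ d ∈ n.divisors, (d:ℂ)^(-z₁) * ((n/d : ℕ):ℂ)^(-z₂)

/-- The local factors `B_{z₁,z₂,z₃,z₄}(n)`. -/
def Bfun (z₁ z₂ z₃ z₄ : ℂ) (n : ℕ) : ℂ :=
  ∏ p ∈ n.primeFactors,
    (∑' j : ℕ, sigz z₁ z₂ (p^(n.factorization p + j)) * sigz z₃ z₄ (p^j) / (p:ℂ)^j)
      * (∑' j : ℕ, sigz z₁ z₂ (p^j) * sigz z₃ z₄ (p^j) / (p:ℂ)^j)⁻¹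



lemma sq_le_geom : ∀ j : ℕ, ((j:ℝ)+1)^2 ≤ 5 * 1.5^j := by
  intro j
  induction j with
  | zero => norm_num
  | succ k ih =>
    push_cast
    rcases lt_or_ge k 4 with h | h
    · interval_cases k <;> norm_num
    · have hk : (4:ℝ) ≤ (k:ℝ) := by exact_mod_cast h
      calc ((k:ℝ)+1+1)^2 ≤ 1.5*((k:ℝ)+1)^2 := by nlinarith
        _ ≤ 1.5 * (5 * 1.5^k) := by nlinarith
        _ = 5 * 1.5^(k+1) := by ring

lemma cube_le_geom : ∀ j : ℕ, ((j:ℝ)+1)^3 ≤ 10 * 1.9^j := by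
  intro j
  induction j with
  | zero => norm_num
  | succ k ih =>
    push_cast
    rcases lt_or_ge k 4 with h | h
    · interval_cases k <;> norm_num
    · have hk : (4:ℝ) ≤ (k:ℝ) := by exact_mod_cast h
      have h1 : (0:ℝ) ≤ (k:ℝ) := by positivity
      calc ((k:ℝ)+1+1)^3 ≤ 1.9*((k:ℝ)+1)^3 := by nlinarith [sq_nonneg ((k:ℝ)-4), sq_nonneg (k:ℝ)]
        _ ≤ 1.9 * (10 * 1.9^k) := by nlinarith
        _ = 10 * 1.9^(k+1) := by ring

lemma summable_sq {x : ℝ} (h0 : 0 ≤ x) (h1 : 1.5*x < 1) :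
    Summable (fun j : ℕ => ((j:ℝ)+1)^2 * x^j) := by
  have hx15 : (0:ℝ) ≤ 1.5*x := by linarith
  have hg : Summable (fun j : ℕ => 5 * (1.5*x)^j) :=
    (summable_geometric_of_lt_one hx15 h1).mul_left 5
  apply Summable.of_nonneg_of_le (fun j => by positivity) (fun j => ?_) hg
  calc ((j:ℝ)+1)^2 * x^j ≤ 5 * 1.5^j * x^j :=
        mul_le_mul_of_nonneg_right (sq_le_geom j) (by positivity)
    _ = 5 * (1.5*x)^j := by rw [mul_pow]; ring

lemma tsum_sq_le {x : ℝ} (h0 : 0 ≤ x) (h1 : 1.5*x < 1) :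
    ∑' j : ℕ, ((j:ℝ)+1)^2 * x^j ≤ 1 + 7.5*x/(1-1.5*x) := by
  rw [Summable.tsum_eq_zero_add (summable_sq h0 h1)]
  have hx15 : (0:ℝ) ≤ 1.5*x := by linarith
  have hsum2 : Summable (fun i : ℕ => 7.5*x*(1.5*x)^i) :=
    (summable_geometric_of_lt_one hx15 h1).mul_left _
  have htail : ∑' i : ℕ, ((↑(i+1):ℝ)+1)^2 * x^(i+1) ≤ 7.5*x/(1-1.5*x) := by
    calc ∑' i : ℕ, ((↑(i+1):ℝ)+1)^2 * x^(i+1)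
        ≤ ∑' i : ℕ, 7.5*x*(1.5*x)^i := by
          have hs1 : Summable (fun i : ℕ => ((↑(i+1):ℝ)+1)^2 * x^(i+1)) :=
            (summable_nat_add_iff (f := fun j : ℕ => ((j:ℝ)+1)^2 * x^j) 1).2 (summable_sq h0 h1)
          apply Summable.tsum_le_tsum _ hs1 hsum2
          intro i
          have h2 : ((↑(i+1):ℝ)+1)^2 ≤ 7.5 * 1.5^i := by
            calc ((↑(i+1):ℝ)+1)^2 ≤ 5 * 1.5^(i+1) := sq_le_geom (i+1)
              _ = 7.5 * 1.5^i := by ring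
          calc ((↑(i+1):ℝ)+1)^2 * x^(i+1) ≤ (7.5 * 1.5^i) * x^(i+1) :=
                mul_le_mul_of_nonneg_right h2 (by positivity)
            _ = 7.5*x*(1.5*x)^i := by rw [pow_succ, mul_pow]; ring
      _ = 7.5*x*(1-1.5*x)⁻¹ := by
          rw [tsum_mul_left, tsum_geometric_of_lt_one (by linarith) h1]
      _ = 7.5*x/(1-1.5*x) := by rw [div_eq_mul_inv]
  push_cast at htail ⊢
  norm_num at htail ⊢
  linarith



lemma my_abs_exp_sub_one (w : ℂ) :
    ‖Complex.exp w - 1‖ ≤ ‖w‖ * Real.exp (‖w‖) := by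
  have hsum : Summable (fun n : ℕ => w ^ n / n !) := NormedSpace.expSeries_div_summable w
  have hexp : Complex.exp w = ∑' n : ℕ, w ^ n / n ! := by
    rw [Complex.exp_eq_exp_ℂ, NormedSpace.exp_eq_tsum_div]
  have h0 : Complex.exp w - 1 = ∑' n : ℕ, w ^ (n+1) / (n+1)! := by
    rw [hexp, Summable.tsum_eq_zero_add hsum]
    simp
  rw [h0]
  have hb : ∀ n : ℕ, ‖w ^ (n+1) / (n+1)!‖ ≤ ‖w‖ * (‖w‖ ^ n / n !) := by
    intro n
    rw [norm_div, norm_pow]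
    have h1 : ((n+1)! : ℝ) = ((n+1):ℝ) * n ! := by
      push_cast [Nat.factorial_succ]; ring
    have hfac : (0:ℝ) < n ! := by positivity
    have : ‖((n+1)! : ℂ)‖ = ((n+1)! : ℝ) := by
      norm_num [Complex.norm_natCast]
    rw [this, h1]
    rw [pow_succ]
    rw [div_le_iff₀ (by positivity)]
    have hw : (0:ℝ) ≤ ‖w‖ := norm_nonneg w
    have h2 : ‖w‖ ^ n * ‖w‖ ≤ ‖w‖ * (‖w‖ ^ n) * ((n:ℝ)+1) := by
      have hnn : (0:ℝ) ≤ ‖w‖ * ‖w‖ ^ n := mul_nonneg hw (pow_nonneg hw n)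
      have hn1 : (0:ℝ) ≤ (n:ℝ) := Nat.cast_nonneg n
      nlinarith [hnn, hn1]
    calc ‖w‖ ^ n * ‖w‖ = ‖w‖ ^ n * ‖w‖ := rfl
      _ ≤ ‖w‖ * (‖w‖ ^ n) * ((n:ℝ)+1) := h2
      _ = ‖w‖ * (‖w‖ ^ n / n !) * (((n:ℝ)+1) * n !) := by
          field_simp
  have hsumb : Summable (fun n : ℕ => ‖w‖ * (‖w‖ ^ n / n !)) :=
    (Real.summable_pow_div_factorial (‖w‖)).mul_left _
  calc ‖∑' n : ℕ, w ^ (n+1) / (n+1)!‖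
      ≤ ∑' n : ℕ, ‖w ^ (n+1) / (n+1)!‖ :=
        norm_tsum_le_tsum_norm (Summable.of_nonneg_of_le (fun n => norm_nonneg _) hb hsumb)
    _ ≤ ∑' n : ℕ, ‖w‖ * (‖w‖ ^ n / n !) := by
        apply Summable.tsum_le_tsum hb _ hsumb
        exact Summable.of_nonneg_of_le (fun n => norm_nonneg _) hb hsumb
    _ = ‖w‖ * ∑' n : ℕ, (‖w‖ ^ n / n !) := tsum_mul_left
    _ = ‖w‖ * Real.exp (‖w‖) := by
        rw [Real.exp_eq_exp_ℝ, NormedSpace.exp_eq_tsum_div]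

lemma log_le_of_dvd {p k d : ℕ} (hp : 2 ≤ p) (hdvd : d ∣ p ^ k) (hd0 : d ≠ 0) :
    Real.log d ≤ k * Real.log p := by
  have hle : d ≤ p ^ k := Nat.le_of_dvd (Nat.pos_of_ne_zero (by positivity)) hdvd
  calc Real.log d ≤ Real.log (p ^ k) := by
        apply Real.log_le_log (by positivity)
        exact_mod_cast hle
    _ = k * Real.log p := by rw [Real.log_pow]

lemma term_exp {p k : ℕ} (hp : p.Prime) {d : ℕ} (hd : d ∈ (p^k).divisors)
    (z₁ z₂ : ℂ) :
    ∃ w : ℂ, (d:ℂ)^(-z₁) * ((p^k/d : ℕ):ℂ)^(-z₂) = Complex.exp w ∧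
      ‖w‖ ≤ k * (‖z₁‖ * Real.log p) + k * (‖z₂‖ * Real.log p) := by
  rw [Nat.mem_divisors] at hd
  obtain ⟨hdvd, hne⟩ := hd
  have hd0 : d ≠ 0 := by rintro rfl; exact hne (Nat.eq_zero_of_zero_dvd hdvd)
  have hedvd : p ^ k / d ∣ p ^ k := Nat.div_dvd_of_dvd hdvd
  have he0 : p ^ k / d ≠ 0 :=
    (Nat.div_pos (Nat.le_of_dvd (Nat.pos_of_ne_zero hne) hdvd) (Nat.pos_of_ne_zero hd0)).ne'
  refine ⟨Complex.log d * (-z₁) + Complex.log (p^k/d : ℕ) * (-z₂), ?_, ?_⟩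
  · rw [Complex.cpow_def_of_ne_zero (by exact_mod_cast hd0),
      Complex.cpow_def_of_ne_zero (by exact_mod_cast he0), Complex.exp_add]
  · have habs : ∀ m : ℕ, m ≠ 0 → m ∣ p ^ k →
        ‖Complex.log (m:ℕ)‖ ≤ k * Real.log p := by
      intro m hm0 hmdvd
      rw [← Complex.natCast_log, Complex.norm_real, Real.norm_eq_abs,
        abs_of_nonneg (Real.log_natCast_nonneg m)]
      exact log_le_of_dvd hp.two_le hmdvd hm0
    calc ‖Complex.log d * (-z₁) + Complex.log (p^k/d : ℕ) * (-z₂)‖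
        ≤ ‖Complex.log d * (-z₁)‖ + ‖Complex.log (p^k/d : ℕ) * (-z₂)‖ :=
          norm_add_le _ _
      _ ≤ k * Real.log p * ‖z₁‖ + k * Real.log p * ‖z₂‖ := by
          rw [norm_mul, norm_mul, norm_neg, norm_neg]
          gcongr
          · exact habs d hd0 hdvd
          · exact habs _ he0 hedvd
      _ = k * (‖z₁‖ * Real.log p) + k * (‖z₂‖ * Real.log p) := by ring

lemma card_divisors_pp {p : ℕ} (hp : p.Prime) (k : ℕ) : (p^k).divisors.card = k + 1 := by
  rw [Nat.divisors_prime_pow hp, Finset.card_map, Finset.card_range]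

lemma sigz_abs_le {p : ℕ} (hp : p.Prime) (z₁ z₂ : ℂ) (k : ℕ) {δ : ℝ}
    (h1 : ‖z₁‖ * Real.log p ≤ δ) (h2 : ‖z₂‖ * Real.log p ≤ δ) :
    ‖sigz z₁ z₂ (p^k)‖ ≤ (k+1) * Real.exp (2*k*δ) := by
  have hδ : 0 ≤ δ := le_trans (by positivity) h1
  unfold sigz
  calc ‖∑ d ∈ (p^k).divisors, (d:ℂ)^(-z₁) * ((p^k/d : ℕ):ℂ)^(-z₂)‖
      ≤ ∑ d ∈ (p^k).divisors, ‖(d:ℂ)^(-z₁) * ((p^k/d : ℕ):ℂ)^(-z₂)‖ :=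
        norm_sum_le _ _
    _ ≤ ∑ d ∈ (p^k).divisors, Real.exp (2*k*δ) := by
        apply Finset.sum_le_sum
        intro d hd
        obtain ⟨w, hw, hwb⟩ := term_exp hp hd z₁ z₂
        rw [hw, Complex.norm_exp]
        apply Real.exp_le_exp.mpr
        have : w.re ≤ ‖w‖ := Complex.re_le_norm w
        have h3 : ‖w‖ ≤ 2*k*δ := by
          calc ‖w‖ ≤ k * (‖z₁‖ * Real.log p) + k * (‖z₂‖ * Real.log p) := hwb
            _ ≤ k * δ + k * δ := by gcongr
            _ = 2*k*δ := by ring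
        linarith
    _ = (k+1) * Real.exp (2*k*δ) := by
        rw [Finset.sum_const, card_divisors_pp hp, nsmul_eq_mul]
        push_cast; ring

lemma sigz_sub_le {p : ℕ} (hp : p.Prime) (z₁ z₂ : ℂ) (k : ℕ) {δ : ℝ}
    (h1 : ‖z₁‖ * Real.log p ≤ δ) (h2 : ‖z₂‖ * Real.log p ≤ δ) :
    ‖sigz z₁ z₂ (p^k) - (k+1)‖ ≤ (k+1) * (2*k*δ * Real.exp (2*k*δ)) := by
  have hδ : 0 ≤ δ := le_trans (by positivity) h1
  have hsub : sigz z₁ z₂ (p^k) - (k+1) =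
      ∑ d ∈ (p^k).divisors, ((d:ℂ)^(-z₁) * ((p^k/d : ℕ):ℂ)^(-z₂) - 1) := by
    rw [Finset.sum_sub_distrib, Finset.sum_const, card_divisors_pp hp]
    simp [sigz]
  rw [hsub]
  calc ‖∑ d ∈ (p^k).divisors, ((d:ℂ)^(-z₁) * ((p^k/d : ℕ):ℂ)^(-z₂) - 1)‖
      ≤ ∑ d ∈ (p^k).divisors, ‖(d:ℂ)^(-z₁) * ((p^k/d : ℕ):ℂ)^(-z₂) - 1‖ :=
        norm_sum_le _ _
    _ ≤ ∑ d ∈ (p^k).divisors, (2*k*δ * Real.exp (2*k*δ)) := by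
        apply Finset.sum_le_sum
        intro d hd
        obtain ⟨w, hw, hwb⟩ := term_exp hp hd z₁ z₂
        have h3 : ‖w‖ ≤ 2*k*δ := by
          calc ‖w‖ ≤ k * (‖z₁‖ * Real.log p) + k * (‖z₂‖ * Real.log p) := hwb
            _ ≤ k * δ + k * δ := by gcongr
            _ = 2*k*δ := by ring
        rw [hw]
        calc ‖Complex.exp w - 1‖ ≤ ‖w‖ * Real.exp (‖w‖) :=
              my_abs_exp_sub_one w
          _ ≤ 2*k*δ * Real.exp (2*k*δ) := by
              apply mul_le_mul h3 (Real.exp_le_exp.mpr h3) (Real.exp_nonneg _) (by positivity)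
    _ = (k+1) * (2*k*δ * Real.exp (2*k*δ)) := by
        rw [Finset.sum_const, card_divisors_pp hp, nsmul_eq_mul]
        push_cast; ring


lemma exp_le_inv_one_sub {x : ℝ} (h0 : 0 ≤ x) (h1 : x < 1) : Real.exp x ≤ 1/(1-x) := by
  have h := Real.add_one_le_exp (-x)
  have hpos := Real.exp_pos x
  rw [Real.exp_neg] at h
  have h2 : (1 - x) * Real.exp x ≤ 1 := by
    have h3 := mul_le_mul_of_nonneg_right h hpos.le
    rw [inv_mul_cancel₀ hpos.ne'] at h3
    nlinarith
  rw [le_div_iff₀ (by linarith)]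
  nlinarith

lemma sigz_one (z₁ z₂ : ℂ) : sigz z₁ z₂ 1 = 1 := by
  simp [sigz]

lemma key_bound {p : ℕ} (hp : p.Prime) (z₁ z₂ z₃ z₄ : ℂ)
    (h1 : ‖z₁‖ * Real.log p ≤ 0.000001)
    (h2 : ‖z₂‖ * Real.log p ≤ 0.000001)
    (h3 : ‖z₃‖ * Real.log p ≤ 0.000001)
    (h4 : ‖z₄‖ * Real.log p ≤ 0.000001)
    (a : ℕ) (ha : 1 ≤ a) :
    ‖(∑' j : ℕ, sigz z₁ z₂ (p^(a + j)) * sigz z₃ z₄ (p^j) / (p:ℂ)^j)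
      * (∑' j : ℕ, sigz z₁ z₂ (p^j) * sigz z₃ z₄ (p^j) / (p:ℂ)^j)⁻¹‖
      ≤ (if p < 23 then 15 else 1) * 3^a := by
  have hp2 : (2:ℝ) ≤ (p:ℝ) := by exact_mod_cast hp.two_le
  have hppos : (0:ℝ) < (p:ℝ) := by linarith
  set u := Real.exp 0.000002 with hu_def
  set v := Real.exp 0.000004 with hv_def
  have hu1 : 1 ≤ u := Real.one_le_exp (by norm_num)
  have hv1 : 1 ≤ v := Real.one_le_exp (by norm_num)
  have huB : u ≤ 1.00001 := by
    have := exp_le_inv_one_sub (x := 0.000002) (by norm_num) (by norm_num)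
    rw [← hu_def] at this
    nlinarith
  have hvB : v ≤ 1.00001 := by
    have := exp_le_inv_one_sub (x := 0.000004) (by norm_num) (by norm_num)
    rw [← hv_def] at this
    nlinarith
  have huv : u^2 = v := by
    rw [hu_def, hv_def, ← Real.exp_nat_mul]; norm_num
  have huvle : u ≤ v := by nlinarith
  set x := v / (p:ℝ) with hx_def
  have hx0 : 0 ≤ x := by positivity
  have hxB : x ≤ 0.500005 := by
    rw [hx_def, div_le_iff₀ hppos]
    nlinarith
  have h15x : 1.5 * x < 1 := by nlinarith
  have h19x : 1.9 * x < 1 := by nlinarith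
  have hexp2 : ∀ k : ℕ, Real.exp (2*(k:ℝ)*0.000001) = u^k := by
    intro k
    rw [hu_def, ← Real.exp_nat_mul]
    congr 1
    ring
  -- instantiated sigz bounds
  have H12 : ∀ k : ℕ, ‖sigz z₁ z₂ (p^k)‖ ≤ ((k:ℝ)+1) * u^k := by
    intro k
    have := sigz_abs_le hp z₁ z₂ k h1 h2
    rwa [hexp2 k] at this
  have H34 : ∀ k : ℕ, ‖sigz z₃ z₄ (p^k)‖ ≤ ((k:ℝ)+1) * u^k := by
    intro k
    have := sigz_abs_le hp z₃ z₄ k h3 h4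
    rwa [hexp2 k] at this
  have D12 : ∀ k : ℕ, ‖sigz z₁ z₂ (p^k) - ((k:ℂ)+1)‖ ≤
      ((k:ℝ)+1) * (2*(k:ℝ)*0.000001 * u^k) := by
    intro k
    have := sigz_sub_le hp z₁ z₂ k h1 h2
    rwa [hexp2 k] at this
  have D34 : ∀ k : ℕ, ‖sigz z₃ z₄ (p^k) - ((k:ℂ)+1)‖ ≤
      ((k:ℝ)+1) * (2*(k:ℝ)*0.000001 * u^k) := by
    intro k
    have := sigz_sub_le hp z₃ z₄ k h3 h4
    rwa [hexp2 k] at this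
  have hxpow : ∀ j : ℕ, v^j / (p:ℝ)^j = x^j := by
    intro j; rw [hx_def, div_pow]
  have huj : ∀ j : ℕ, u^j * u^j = v^j := by
    intro j; rw [← mul_pow, ← pow_two, huv]
  -- Numerator termwise bound
  have hNterm : ∀ j : ℕ, ‖sigz z₁ z₂ (p^(a + j)) * sigz z₃ z₄ (p^j) / (p:ℂ)^j‖
      ≤ (((a:ℝ)+1) * u^a) * (((j:ℝ)+1)^2 * x^j) := by
    intro j
    rw [norm_div, norm_mul, norm_pow, Complex.norm_natCast]
    have e1 : ‖sigz z₁ z₂ (p^(a+j))‖ ≤ ((a:ℝ)+(j:ℝ)+1) * u^(a+j) := by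
      have := H12 (a+j); push_cast at this ⊢; linarith
    have e2 : ‖sigz z₃ z₄ (p^j)‖ ≤ ((j:ℝ)+1) * u^j := H34 j
    have hppow : (0:ℝ) < (p:ℝ)^j := by positivity
    have step1 : ‖sigz z₁ z₂ (p^(a+j))‖ * ‖sigz z₃ z₄ (p^j)‖ / (p:ℝ)^j
        ≤ (((a:ℝ)+(j:ℝ)+1) * u^(a+j)) * (((j:ℝ)+1) * u^j) / (p:ℝ)^j := by
      have h5 := mul_le_mul e1 e2 (norm_nonneg _) (by positivity)
      exact (div_le_div_iff_of_pos_right hppow).mpr h5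
    have step2 : (((a:ℝ)+(j:ℝ)+1) * u^(a+j)) * (((j:ℝ)+1) * u^j) / (p:ℝ)^j
        ≤ ((((a:ℝ)+1)*((j:ℝ)+1)) * u^(a+j)) * (((j:ℝ)+1) * u^j) / (p:ℝ)^j := by
      gcongr
      have ha0 : (0:ℝ) ≤ (a:ℝ) := by positivity
      have hj0 : (0:ℝ) ≤ (j:ℝ) := by positivity
      nlinarith
    have step3 : ((((a:ℝ)+1)*((j:ℝ)+1)) * u^(a+j)) * (((j:ℝ)+1) * u^j) / (p:ℝ)^j
        = (((a:ℝ)+1) * u^a) * (((j:ℝ)+1)^2 * (v^j/(p:ℝ)^j)) := by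
      rw [pow_add, ← huj j]; ring
    rw [hxpow j] at step3
    linarith
  have hgN : Summable (fun j : ℕ => (((a:ℝ)+1) * u^a) * (((j:ℝ)+1)^2 * x^j)) :=
    (summable_sq hx0 h15x).mul_left _
  have hNsum : Summable (fun j : ℕ => sigz z₁ z₂ (p^(a + j)) * sigz z₃ z₄ (p^j) / (p:ℂ)^j) := by
    apply Summable.of_norm_bounded hgN
    intro j
    exact hNterm j
  have hnorm_sum : Summable (fun j : ℕ =>
      ‖sigz z₁ z₂ (p^(a + j)) * sigz z₃ z₄ (p^j) / (p:ℂ)^j‖) := by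
    apply Summable.of_nonneg_of_le (fun j => norm_nonneg _) _ hgN
    intro j
    exact hNterm j
  have hNle : ‖∑' j : ℕ, sigz z₁ z₂ (p^(a + j)) * sigz z₃ z₄ (p^j) / (p:ℂ)^j‖
      ≤ (((a:ℝ)+1) * u^a) * (1 + 7.5*x/(1-1.5*x)) := by
    calc ‖∑' j : ℕ, sigz z₁ z₂ (p^(a + j)) * sigz z₃ z₄ (p^j) / (p:ℂ)^j‖
        ≤ ∑' j : ℕ, ‖sigz z₁ z₂ (p^(a + j)) * sigz z₃ z₄ (p^j) / (p:ℂ)^j‖ :=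
          norm_tsum_le_tsum_norm hnorm_sum
      _ ≤ ∑' j : ℕ, (((a:ℝ)+1) * u^a) * (((j:ℝ)+1)^2 * x^j) := by
          apply Summable.tsum_le_tsum _ hnorm_sum hgN
          intro j
          exact hNterm j
      _ = (((a:ℝ)+1) * u^a) * ∑' j : ℕ, (((j:ℝ)+1)^2 * x^j) := tsum_mul_left
      _ ≤ (((a:ℝ)+1) * u^a) * (1 + 7.5*x/(1-1.5*x)) := by
          apply mul_le_mul_of_nonneg_left (tsum_sq_le hx0 h15x) (by positivity)
  -- Denominator term bounds
  have hDterm : ∀ j : ℕ, ‖sigz z₁ z₂ (p^j) * sigz z₃ z₄ (p^j) / (p:ℂ)^j‖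
      ≤ ((j:ℝ)+1)^2 * x^j := by
    intro j
    rw [norm_div, norm_mul, norm_pow, Complex.norm_natCast]
    have hppow : (0:ℝ) < (p:ℝ)^j := by positivity
    have h5 := mul_le_mul (H12 j) (H34 j) (norm_nonneg _) (by positivity)
    calc ‖sigz z₁ z₂ (p^j)‖ * ‖sigz z₃ z₄ (p^j)‖ / (p:ℝ)^j
        ≤ (((j:ℝ)+1) * u^j) * (((j:ℝ)+1) * u^j) / (p:ℝ)^j := (div_le_div_iff_of_pos_right hppow).mpr h5
      _ = ((j:ℝ)+1)^2 * (v^j/(p:ℝ)^j) := by rw [← huj j]; ring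
      _ = ((j:ℝ)+1)^2 * x^j := by rw [hxpow j]
  have hDsum : Summable (fun j : ℕ => sigz z₁ z₂ (p^j) * sigz z₃ z₄ (p^j) / (p:ℂ)^j) := by
    apply Summable.of_norm_bounded (summable_sq hx0 h15x)
    intro j; exact hDterm j
  have hD0 : sigz z₁ z₂ (p^0) * sigz z₃ z₄ (p^0) / (p:ℂ)^0 = 1 := by
    rw [pow_zero, sigz_one, sigz_one]; norm_num
  have hxp : ∀ j : ℕ, x^j * (p:ℝ)^j = v^j := by
    intro j
    rw [← hxpow j]
    field_simp
  have hdiff : ∀ j : ℕ, ‖sigz z₁ z₂ (p^j) * sigz z₃ z₄ (p^j) / (p:ℂ)^j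
      - ((((j:ℝ)+1)^2 / (p:ℝ)^j : ℝ) : ℂ)‖ ≤ 0.00004 * (1.9*x)^j := by
    intro j
    have hppow : (0:ℝ) < (p:ℝ)^j := by positivity
    have hpne : ((p:ℂ))^j ≠ 0 := by
      apply pow_ne_zero
      exact_mod_cast hp.pos.ne'
    have hident : sigz z₁ z₂ (p^j) * sigz z₃ z₄ (p^j) / (p:ℂ)^j
        - ((((j:ℝ)+1)^2 / (p:ℝ)^j : ℝ) : ℂ)
        = ((sigz z₁ z₂ (p^j) - ((j:ℂ)+1)) * sigz z₃ z₄ (p^j)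
           + ((j:ℂ)+1) * (sigz z₃ z₄ (p^j) - ((j:ℂ)+1))) / (p:ℂ)^j := by
      push_cast
      rw [← sub_div]
      congr 1
      ring
    rw [hident, norm_div, norm_pow, Complex.norm_natCast, div_le_iff₀ hppow]
    have hA := D12 j
    have hB := H34 j
    have hC := D34 j
    have habs1 : ‖(j:ℂ)+1‖ = (j:ℝ)+1 := by
      rw [show ((j:ℂ)+1) = (((j+1:ℕ)):ℂ) by push_cast; ring, Complex.norm_natCast]
      push_cast; ring
    have hUV : u^j ≤ v^j := pow_le_pow_left₀ (by linarith) huvle j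
    have hU0 : (0:ℝ) ≤ u^j := by positivity
    have hV0 : (0:ℝ) ≤ v^j := by positivity
    have hj0 : (0:ℝ) ≤ (j:ℝ) := by positivity
    calc ‖(sigz z₁ z₂ (p^j) - ((j:ℂ)+1)) * sigz z₃ z₄ (p^j)
           + ((j:ℂ)+1) * (sigz z₃ z₄ (p^j) - ((j:ℂ)+1))‖
        ≤ ‖(sigz z₁ z₂ (p^j) - ((j:ℂ)+1)) * sigz z₃ z₄ (p^j)‖
          + ‖((j:ℂ)+1) * (sigz z₃ z₄ (p^j) - ((j:ℂ)+1))‖ := norm_add_le _ _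
      _ ≤ (((j:ℝ)+1) * (2*(j:ℝ)*0.000001 * u^j)) * (((j:ℝ)+1) * u^j)
          + ((j:ℝ)+1) * (((j:ℝ)+1) * (2*(j:ℝ)*0.000001 * u^j)) := by
          rw [norm_mul, norm_mul, habs1]
          apply add_le_add
          · exact mul_le_mul hA hB (norm_nonneg _) (by positivity)
          · exact mul_le_mul_of_nonneg_left hC (by positivity)
      _ = 2*(j:ℝ)*0.000001*((j:ℝ)+1)^2*(u^j*u^j + u^j) := by ring
      _ ≤ 2*(j:ℝ)*0.000001*((j:ℝ)+1)^2*(2*v^j) := by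
          have hfac : (0:ℝ) ≤ 2*(j:ℝ)*0.000001*((j:ℝ)+1)^2 := by positivity
          have hsum2 : u^j*u^j + u^j ≤ 2*v^j := by
            rw [huj j]; linarith
          exact mul_le_mul_of_nonneg_left hsum2 hfac
      _ ≤ 0.000004*((j:ℝ)+1)^3*v^j := by nlinarith [sq_nonneg ((j:ℝ)+1)]
      _ ≤ 0.000004*(10*1.9^j)*v^j := by
          have := cube_le_geom j
          have h40 : (0:ℝ) ≤ 0.000004*v^j := by positivity
          nlinarith
      _ = 0.00004 * 1.9^j * v^j := by ring
      _ = 0.00004 * (1.9*x)^j * (p:ℝ)^j := by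
          rw [mul_pow]
          rw [← hxp j]
          ring
  -- real part lower bound for each term
  have hre_term : ∀ j : ℕ, -(0.00004 * (1.9*x)^j)
      ≤ (sigz z₁ z₂ (p^j) * sigz z₃ z₄ (p^j) / (p:ℂ)^j).re := by
    intro j
    have h5 := hdiff j
    have hc0 : (0:ℝ) ≤ ((j:ℝ)+1)^2 / (p:ℝ)^j := by positivity
    have h6 : ((((j:ℝ)+1)^2 / (p:ℝ)^j : ℝ))
        - (sigz z₁ z₂ (p^j) * sigz z₃ z₄ (p^j) / (p:ℂ)^j).re
        ≤ ‖sigz z₁ z₂ (p^j) * sigz z₃ z₄ (p^j) / (p:ℂ)^j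
            - ((((j:ℝ)+1)^2 / (p:ℝ)^j : ℝ) : ℂ)‖ := by
      have h7 := Complex.re_le_norm (((((j:ℝ)+1)^2 / (p:ℝ)^j : ℝ)) : ℂ)
      have h8 := Complex.re_le_norm ((((((j:ℝ)+1)^2 / (p:ℝ)^j : ℝ)) : ℂ)
        - sigz z₁ z₂ (p^j) * sigz z₃ z₄ (p^j) / (p:ℂ)^j)
      rw [Complex.sub_re, Complex.ofReal_re] at h8
      calc ((((j:ℝ)+1)^2 / (p:ℝ)^j : ℝ))
          - (sigz z₁ z₂ (p^j) * sigz z₃ z₄ (p^j) / (p:ℂ)^j).re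
          ≤ ‖(((((j:ℝ)+1)^2 / (p:ℝ)^j : ℝ)) : ℂ)
            - sigz z₁ z₂ (p^j) * sigz z₃ z₄ (p^j) / (p:ℂ)^j‖ := h8
        _ = ‖sigz z₁ z₂ (p^j) * sigz z₃ z₄ (p^j) / (p:ℂ)^j
            - ((((j:ℝ)+1)^2 / (p:ℝ)^j : ℝ) : ℂ)‖ := by
            rw [← neg_sub, norm_neg]
    linarith
  have hDresum : Summable (fun j : ℕ => (sigz z₁ z₂ (p^j) * sigz z₃ z₄ (p^j) / (p:ℂ)^j).re) :=
    (Complex.hasSum_re hDsum.hasSum).summable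
  have hgeo19 : Summable (fun j : ℕ => 0.00004 * (1.9*x)^j) :=
    (summable_geometric_of_lt_one (by positivity) h19x).mul_left _
  have htailsum : Summable (fun i : ℕ =>
      (sigz z₁ z₂ (p^(i+1)) * sigz z₃ z₄ (p^(i+1)) / (p:ℂ)^(i+1)).re) :=
    (summable_nat_add_iff (f := fun j : ℕ =>
      (sigz z₁ z₂ (p^j) * sigz z₃ z₄ (p^j) / (p:ℂ)^j).re) 1).2 hDresum
  have hgeo19' : Summable (fun i : ℕ => -(0.00004 * (1.9*x)^(i+1))) :=
    ((summable_nat_add_iff (f := fun j : ℕ => 0.00004 * (1.9*x)^j) 1).2 hgeo19).neg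
  have htail_ge : ∑' i : ℕ, (-(0.00004 * (1.9*x)^(i+1)))
      ≤ ∑' i : ℕ, (sigz z₁ z₂ (p^(i+1)) * sigz z₃ z₄ (p^(i+1)) / (p:ℂ)^(i+1)).re :=
    Summable.tsum_le_tsum (fun i => hre_term (i+1)) hgeo19' htailsum
  have hval : ∑' i : ℕ, (-(0.00004 * (1.9*x)^(i+1)))
      = -(0.00004 * (1.9*x) * (1-1.9*x)⁻¹) := by
    rw [tsum_neg]
    congr 1
    calc ∑' i : ℕ, 0.00004 * (1.9*x)^(i+1)
        = ∑' i : ℕ, (0.00004*(1.9*x)) * (1.9*x)^i := by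
          apply tsum_congr; intro i; rw [pow_succ]; ring
      _ = (0.00004*(1.9*x)) * (1-1.9*x)⁻¹ := by
          rw [tsum_mul_left, tsum_geometric_of_lt_one (by positivity) h19x]
      _ = 0.00004 * (1.9*x) * (1-1.9*x)⁻¹ := by ring
  have hnum : 0.00004 * (1.9*x) * (1-1.9*x)⁻¹ ≤ 0.01 := by
    set t := 1.9*x with ht_def
    have ht0 : 0 ≤ t := by positivity
    have htB : t ≤ 0.9500095 := by rw [ht_def]; nlinarith
    have htlt : 0 < 1 - t := by linarith [h19x]
    have hs := mul_inv_cancel₀ htlt.ne'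
    have hs0 : 0 ≤ (1-t)⁻¹ := by positivity
    nlinarith [mul_le_mul_of_nonneg_right htB hs0]
  have hDre : 0.99 ≤ (∑' j : ℕ, sigz z₁ z₂ (p^j) * sigz z₃ z₄ (p^j) / (p:ℂ)^j).re := by
    rw [Complex.re_tsum hDsum, Summable.tsum_eq_zero_add hDresum]
    have h0re : (sigz z₁ z₂ (p^0) * sigz z₃ z₄ (p^0) / (p:ℂ)^0).re = 1 := by
      rw [hD0, Complex.one_re]
    rw [h0re]
    have := htail_ge
    rw [hval] at this
    linarith
  have hDabs : 0.99 ≤ ‖∑' j : ℕ, sigz z₁ z₂ (p^j) * sigz z₃ z₄ (p^j) / (p:ℂ)^j‖ :=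
    le_trans hDre (Complex.re_le_norm _)
  -- combine
  rw [norm_mul, norm_inv]
  have hfin1 : (‖∑' j : ℕ, sigz z₁ z₂ (p^j) * sigz z₃ z₄ (p^j) / (p:ℂ)^j‖)⁻¹
      ≤ 1.011 := by
    have h9 : (0:ℝ) < 0.99 := by norm_num
    have h10 := inv_anti₀ h9 hDabs
    have h11 : (0.99:ℝ)⁻¹ ≤ 1.011 := by norm_num
    linarith
  have h2u3 : ((a:ℝ)+1) * u^a ≤ 0.667 * 3^a := by
    have hn : ((a:ℝ)+1) ≤ 2^a := by
      have h12 : (a+1 : ℕ) ≤ 2^a := Nat.lt_two_pow_self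
      calc ((a:ℝ)+1) = ((a+1 : ℕ) : ℝ) := by push_cast; ring
        _ ≤ ((2^a : ℕ) : ℝ) := by exact_mod_cast h12
        _ = 2^a := by push_cast; ring
    have step : ((a:ℝ)+1) * u^a ≤ (2*u)^a := by
      rw [mul_pow]
      exact mul_le_mul hn le_rfl (by positivity) (by positivity)
    have hr0 : (0:ℝ) ≤ 2*u/3 := by positivity
    have hr1 : 2*u/3 ≤ 1 := by nlinarith
    have step2 : (2*u)^a = 3^a * (2*u/3)^a := by
      rw [← mul_pow]; congr 1; ring
    have step3 : (2*u/3)^a ≤ 2*u/3 := by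
      calc (2*u/3)^a ≤ (2*u/3)^1 := pow_le_pow_of_le_one hr0 hr1 ha
        _ = 2*u/3 := pow_one _
    have hP3 : (0:ℝ) < 3^a := by positivity
    calc ((a:ℝ)+1)*u^a ≤ (2*u)^a := step
      _ = 3^a * (2*u/3)^a := step2
      _ ≤ 3^a * (2*u/3) := mul_le_mul_of_nonneg_left step3 (by positivity)
      _ ≤ 0.667 * 3^a := by nlinarith
  have hP3 : (0:ℝ) < 3^a := by positivity
  have hSnonneg : 0 ≤ 1 + 7.5*x/(1-1.5*x) := by
    have h30 : 0 ≤ 7.5*x/(1-1.5*x) := div_nonneg (by positivity) (by linarith)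
    linarith
  have habsD0 : 0 ≤ (‖∑' j : ℕ, sigz z₁ z₂ (p^j) * sigz z₃ z₄ (p^j) / (p:ℂ)^j‖)⁻¹ := by
    positivity
  by_cases hcase : p < 23
  · rw [if_pos hcase]
    have hS : 1 + 7.5*x/(1-1.5*x) ≤ 16.1 := by
      have hden : (0.2499925:ℝ) ≤ 1-1.5*x := by nlinarith
      have hq : 7.5*x/(1-1.5*x) ≤ 15.1 := by
        rw [div_le_iff₀ (by nlinarith)]
        nlinarith
      linarith
    have hNle2 : ‖∑' j : ℕ, sigz z₁ z₂ (p^(a + j)) * sigz z₃ z₄ (p^j) / (p:ℂ)^j‖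
        ≤ (0.667 * 3^a) * 16.1 :=
      le_trans hNle (mul_le_mul h2u3 hS hSnonneg (by positivity))
    calc ‖∑' j : ℕ, sigz z₁ z₂ (p^(a + j)) * sigz z₃ z₄ (p^j) / (p:ℂ)^j‖
          * (‖∑' j : ℕ, sigz z₁ z₂ (p^j) * sigz z₃ z₄ (p^j) / (p:ℂ)^j‖)⁻¹
        ≤ ((0.667 * 3^a) * 16.1) * 1.011 :=
          mul_le_mul hNle2 hfin1 habsD0 (by positivity)
      _ ≤ 15 * 3^a := by nlinarith
  · rw [if_neg hcase]
    have hp23 : (23:ℝ) ≤ (p:ℝ) := by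
      have : 23 ≤ p := le_of_not_gt hcase
      exact_mod_cast this
    have hx23 : x ≤ 0.04349 := by
      rw [hx_def, div_le_iff₀ (by linarith)]
      nlinarith
    have hS : 1 + 7.5*x/(1-1.5*x) ≤ 1.35 := by
      have hq : 7.5*x/(1-1.5*x) ≤ 0.35 := by
        rw [div_le_iff₀ (by nlinarith)]
        nlinarith
      linarith
    have hNle2 : ‖∑' j : ℕ, sigz z₁ z₂ (p^(a + j)) * sigz z₃ z₄ (p^j) / (p:ℂ)^j‖
        ≤ (0.667 * 3^a) * 1.35 :=
      le_trans hNle (mul_le_mul h2u3 hS hSnonneg (by positivity))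
    calc ‖∑' j : ℕ, sigz z₁ z₂ (p^(a + j)) * sigz z₃ z₄ (p^j) / (p:ℂ)^j‖
          * (‖∑' j : ℕ, sigz z₁ z₂ (p^j) * sigz z₃ z₄ (p^j) / (p:ℂ)^j‖)⁻¹
        ≤ ((0.667 * 3^a) * 1.35) * 1.011 :=
          mul_le_mul hNle2 hfin1 habsD0 (by positivity)
      _ ≤ 1 * 3^a := by nlinarith

lemma omega_eq_sum (n : ℕ) : (Ω n : ℕ) = ∑ p ∈ n.primeFactors, n.factorization p := by
  rw [ArithmeticFunction.cardFactors_apply]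
  have h1 : n.primeFactorsList.length = Multiset.card (n.primeFactorsList : Multiset ℕ) := by
    simp
  rw [h1, ← Multiset.toFinset_sum_count_eq]
  apply Finset.sum_congr
  · simp
  · intro p _
    simp

/-- There is an absolute constant `C` such that for `T ≥ 10`, `|z_j| = 3^j/log T`, and `n ≥ 1`
with all prime factors at most `T^{10⁻⁸}`, one has `|B_{z₁,z₂,z₃,z₄}(n)| ≤ C · 3^{Ω(n)}`. -/
theorem B_le_three_pow_Omega :
    ∃ C : ℝ, ∀ T : ℝ, 10 ≤ T → ∀ z₁ z₂ z₃ z₄ : ℂ,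
      ‖z₁‖ = 3/Real.log T → ‖z₂‖ = 9/Real.log T →
      ‖z₃‖ = 27/Real.log T → ‖z₄‖ = 81/Real.log T →
      ∀ n : ℕ, 0 < n → (∀ p : ℕ, p.Prime → p ∣ n → (p:ℝ) ≤ T^((10:ℝ)^(-8:ℝ))) →
      ‖Bfun z₁ z₂ z₃ z₄ n‖ ≤ C * 3^(Ω n) := by
  refine ⟨15^8, ?_⟩
  intro T hT z₁ z₂ z₃ z₄ hz1 hz2 hz3 hz4 n hn hsmooth
  have hT1 : (1:ℝ) < T := by linarith
  have hlogT : 0 < Real.log T := Real.log_pos hT1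
  have hc : (10:ℝ)^(-8:ℝ) = 0.00000001 := by
    rw [show (-8:ℝ) = ((-8:ℤ):ℝ) by norm_num, Real.rpow_intCast]
    norm_num
  -- per-prime small hypothesis
  have hzsmall : ∀ p : ℕ, p ∈ n.primeFactors → ∀ z : ℂ, ‖z‖ ≤ 81/Real.log T →
      ‖z‖ * Real.log p ≤ 0.000001 := by
    intro p hp z hz
    have hpp : p.Prime := Nat.prime_of_mem_primeFactors hp
    have hpdvd : p ∣ n := Nat.dvd_of_mem_primeFactors hp
    have hp0 : (0:ℝ) < p := by exact_mod_cast hpp.pos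
    have hple := hsmooth p hpp hpdvd
    have hlogp : Real.log p ≤ 0.00000001 * Real.log T := by
      calc Real.log p ≤ Real.log (T^((10:ℝ)^(-8:ℝ))) := Real.log_le_log hp0 hple
        _ = (10:ℝ)^(-8:ℝ) * Real.log T := Real.log_rpow (by linarith) _
        _ = 0.00000001 * Real.log T := by rw [hc]
    have hlogp0 : 0 ≤ Real.log p := Real.log_natCast_nonneg p
    calc ‖z‖ * Real.log p ≤ (81/Real.log T) * (0.00000001 * Real.log T) := by
          apply mul_le_mul hz hlogp hlogp0 (by positivity)
      _ = 81 * 0.00000001 * (Real.log T / Real.log T) := by ring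
      _ = 81 * 0.00000001 := by rw [div_self hlogT.ne']; ring
      _ ≤ 0.000001 := by norm_num
  have hb : ∀ p ∈ n.primeFactors,
      ‖(∑' j : ℕ, sigz z₁ z₂ (p^(n.factorization p + j)) * sigz z₃ z₄ (p^j) / (p:ℂ)^j)
        * (∑' j : ℕ, sigz z₁ z₂ (p^j) * sigz z₃ z₄ (p^j) / (p:ℂ)^j)⁻¹‖
      ≤ (if p < 23 then (15:ℝ) else 1) * 3^(n.factorization p) := by
    intro p hp
    have hpp : p.Prime := Nat.prime_of_mem_primeFactors hp
    have ha : 1 ≤ n.factorization p := by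
      have := Nat.Prime.factorization_pos_of_dvd hpp hn.ne' (Nat.dvd_of_mem_primeFactors hp)
      omega
    apply key_bound hpp z₁ z₂ z₃ z₄
      (hzsmall p hp z₁ (by rw [hz1]; gcongr <;> norm_num))
      (hzsmall p hp z₂ (by rw [hz2]; gcongr <;> norm_num))
      (hzsmall p hp z₃ (by rw [hz3]; gcongr <;> norm_num))
      (hzsmall p hp z₄ (le_of_eq hz4))
      _ ha
  -- assemble the product
  rw [Bfun, norm_prod]
  have hstep1 : ∏ p ∈ n.primeFactors,
      ‖(∑' j : ℕ, sigz z₁ z₂ (p^(n.factorization p + j)) * sigz z₃ z₄ (p^j) / (p:ℂ)^j)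
        * (∑' j : ℕ, sigz z₁ z₂ (p^j) * sigz z₃ z₄ (p^j) / (p:ℂ)^j)⁻¹‖
      ≤ ∏ p ∈ n.primeFactors, (if p < 23 then (15:ℝ) else 1) * 3^(n.factorization p) :=
    Finset.prod_le_prod (fun p _ => norm_nonneg _) hb
  have hstep2 : ∏ p ∈ n.primeFactors, (if p < 23 then (15:ℝ) else 1) * 3^(n.factorization p)
      = (∏ p ∈ n.primeFactors, (if p < 23 then (15:ℝ) else 1))
        * ∏ p ∈ n.primeFactors, (3:ℝ)^(n.factorization p) := Finset.prod_mul_distrib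
  have hstep3 : ∏ p ∈ n.primeFactors, (3:ℝ)^(n.factorization p)
      = 3^(Ω n) := by
    rw [Finset.prod_pow_eq_pow_sum, omega_eq_sum]
  have hstep4 : (∏ p ∈ n.primeFactors, (if p < 23 then (15:ℝ) else 1)) ≤ 15^8 := by
    have he : (∏ p ∈ n.primeFactors, (if p < 23 then (15:ℝ) else 1))
        = ∏ p ∈ n.primeFactors.filter (· < 23), (15:ℝ) := (Finset.prod_filter _ _).symm
    rw [he, Finset.prod_const]
    have hsub : n.primeFactors.filter (· < 23) ⊆ (Finset.range 23).filter Nat.Prime := by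
      intro q hq
      rw [Finset.mem_filter] at hq ⊢
      exact ⟨Finset.mem_range.mpr hq.2, Nat.prime_of_mem_primeFactors hq.1⟩
    have hcard : (n.primeFactors.filter (· < 23)).card ≤ 8 := by
      have h8 : ((Finset.range 23).filter Nat.Prime).card = 8 := by decide
      calc (n.primeFactors.filter (· < 23)).card
          ≤ ((Finset.range 23).filter Nat.Prime).card := Finset.card_le_card hsub
        _ = 8 := h8
    exact pow_le_pow_right₀ (by norm_num) hcard
  have h3pos : (0:ℝ) ≤ 3^(Ω n) := by positivity
  calc ∏ p ∈ n.primeFactors,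
      ‖(∑' j : ℕ, sigz z₁ z₂ (p^(n.factorization p + j)) * sigz z₃ z₄ (p^j) / (p:ℂ)^j)
        * (∑' j : ℕ, sigz z₁ z₂ (p^j) * sigz z₃ z₄ (p^j) / (p:ℂ)^j)⁻¹‖
      ≤ (∏ p ∈ n.primeFactors, (if p < 23 then (15:ℝ) else 1)) * 3^(Ω n) := by
        rw [← hstep3, ← hstep2]; exact hstep1
    _ ≤ 15^8 * 3^(Ω n) := mul_le_mul_of_nonneg_right hstep4 h3pos
end
end

section
/- There is an absolute constant C such that for all real numbers P, Q with 100 ≤ P ≤ Q, Σ_{m,n} (2e)^{Ω(m)+Ω(n)} d_3(m) d_3(n) / lcm(m,n) ≤ C · exp(400 · Σ_{P ≤ p < Q} 1/p), where the outer sum runs over all pairs of positive integers m, n all of whose prime factors p satisfy P ≤ p < Q, and the inner sum runs over primes. -/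
open scoped BigOperators
open ArithmeticFunction
open scoped ArithmeticFunction.Omega
open scoped ArithmeticFunction.sigma ArithmeticFunction.zeta
open scoped Classical

noncomputable section

/-- The 3-divisor function `d₃(n) = Σ_{abc = n} 1 = Σ_{d ∣ n} τ(d)`. -/
def d3 (n : ℕ) : ℕ := ∑ d ∈ n.divisors, d.divisors.card

namespace RankinAux

/-- local weight at a prime: `g a = (2e)^a * (a+1)(a+2)/2`. -/
def g (a : ℕ) : ℝ := (2*Real.exp 1)^a * (((a:ℝ)+1)*((a:ℝ)+2)/2)

lemma e_lb : (2.7182818283:ℝ) ≤ Real.exp 1 := Real.exp_one_gt_d9.le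
lemma e_ub : Real.exp 1 ≤ 2.71828183 := Real.exp_one_lt_d9.le.trans (by norm_num)

lemma g_nonneg (a : ℕ) : 0 ≤ g a := by
  have h : (0:ℝ) ≤ 2*Real.exp 1 := by positivity
  unfold g; positivity

lemma g_zero : g 0 = 1 := by norm_num [g]

lemma g_succ (a : ℕ) : g (a+1) = (2*Real.exp 1) * (((a:ℝ)+3)/((a:ℝ)+1)) * g a := by
  unfold g
  have h1 : ((a:ℝ)+1) ≠ 0 := by positivity
  push_cast
  field_simp
  ring

lemma g_ratio_lb (a : ℕ) : 5.4365 * g a ≤ g (a+1) := by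
  rw [g_succ]
  have h1 : (0:ℝ) < (a:ℝ)+1 := by positivity
  have h2 : (5.4365636566:ℝ) ≤ 2*Real.exp 1 := by nlinarith [e_lb]
  have h3 : (1:ℝ) ≤ ((a:ℝ)+3)/((a:ℝ)+1) := by
    rw [le_div_iff₀ h1]; linarith
  nlinarith [g_nonneg a, mul_le_mul h2 h3 (by norm_num) (by positivity : (0:ℝ) ≤ 2*Real.exp 1)]

lemma g_ratio_ub1 {a : ℕ} (ha : 1 ≤ a) : g (a+1) ≤ 10.88 * g a := by
  rw [g_succ]
  have h1 : (0:ℝ) < (a:ℝ)+1 := by positivity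
  have ha' : (1:ℝ) ≤ (a:ℝ) := by exact_mod_cast ha
  have h2 : 2*Real.exp 1 ≤ 5.43657 := by nlinarith [e_ub]
  have h3 : ((a:ℝ)+3)/((a:ℝ)+1) ≤ 2 := by
    rw [div_le_iff₀ h1]; linarith
  have h4 : (0:ℝ) ≤ ((a:ℝ)+3)/((a:ℝ)+1) := by positivity
  nlinarith [g_nonneg a, mul_le_mul h2 h3 h4 (by norm_num : (0:ℝ) ≤ (5.43657:ℝ))]

lemma g_ratio_ub4 {a : ℕ} (ha : 4 ≤ a) : g (a+1) ≤ 7.6112 * g a := by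
  rw [g_succ]
  have h1 : (0:ℝ) < (a:ℝ)+1 := by positivity
  have ha' : (4:ℝ) ≤ (a:ℝ) := by exact_mod_cast ha
  have h2 : 2*Real.exp 1 ≤ 5.43657 := by nlinarith [e_ub]
  have h3 : ((a:ℝ)+3)/((a:ℝ)+1) ≤ 7/5 := by
    rw [div_le_iff₀ h1]; linarith
  have h4 : (0:ℝ) ≤ ((a:ℝ)+3)/((a:ℝ)+1) := by positivity
  nlinarith [g_nonneg a, mul_le_mul h2 h3 h4 (by norm_num : (0:ℝ) ≤ (5.43657:ℝ))]

lemma g_one_ub : g 1 ≤ 16.3098 := by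
  have := e_ub; norm_num [g]; nlinarith [e_ub]

lemma g_one_sq_ub : g 1 * g 1 ≤ 266.01 := by
  have h := g_one_ub
  nlinarith [g_nonneg 1]

/-- generic geometric-domination sum bound. -/
lemma sum_geom_bound (u : ℕ → ℝ) (b0 : ℕ) (r : ℝ) (hr0 : 0 ≤ r) (hr1 : r < 1)
    (hnn : ∀ b, 0 ≤ u b) (hstep : ∀ b, b0 ≤ b → u (b+1) ≤ r * u b) (M : ℕ) :
    ∑ b ∈ Finset.Icc b0 M, u b ≤ u b0 / (1-r) := by
  have key : ∀ b, b0 ≤ b → u b ≤ u b0 * r^(b-b0) := by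
    intro b hb
    induction b, hb using Nat.le_induction with
    | base => simp
    | succ b hb ih =>
      have h1 := hstep b hb
      have h2 : u (b+1) ≤ r * (u b0 * r^(b-b0)) := h1.trans (by nlinarith [hnn b])
      calc u (b+1) ≤ r * (u b0 * r^(b-b0)) := h2
        _ = u b0 * r^(b+1-b0) := by
            rw [Nat.succ_sub hb, pow_succ]; ring
  have h1r : (0:ℝ) < 1 - r := by linarith
  calc ∑ b ∈ Finset.Icc b0 M, u b ≤ ∑ b ∈ Finset.Icc b0 M, u b0 * r^(b-b0) := by
        apply Finset.sum_le_sum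
        intro b hb
        exact key b (Finset.mem_Icc.mp hb).1
    _ = u b0 * ∑ b ∈ Finset.Icc b0 M, r^(b-b0) := by rw [Finset.mul_sum]
    _ ≤ u b0 * (1/(1-r)) := by
        have hub0 : 0 ≤ u b0 := hnn b0
        apply mul_le_mul_of_nonneg_left _ hub0
        rw [← Finset.Ico_add_one_right_eq_Icc, Finset.sum_Ico_eq_sum_range]
        have : ∀ i ∈ Finset.range (M+1-b0), r^(b0+i-b0) = r^i := by
          intro i _; congr 1; omega
        rw [Finset.sum_congr rfl this]
        have h := geom_sum_mul r (M+1-b0)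
        have hpow : 0 ≤ r^(M+1-b0) := pow_nonneg hr0 _
        rw [le_div_iff₀ h1r]
        nlinarith [h, hpow]
    _ = u b0 / (1-r) := by rw [mul_one_div]

end RankinAux

namespace RankinAux

variable {x : ℝ}

lemma gx_nonneg (hx0 : 0 < x) (b : ℕ) : 0 ≤ g b * x^b := by
  have := g_nonneg b; positivity

/-- geometric tail for `g b * x^b` starting at any `b0 ≥ 1`. -/
lemma L1 (hx0 : 0 < x) (hx : x ≤ 1/100) {b0 : ℕ} (hb0 : 1 ≤ b0) (M : ℕ) :
    ∑ b ∈ Finset.Icc b0 M, g b * x^b ≤ 1.1221 * (g b0 * x^b0) := by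
  have h := sum_geom_bound (fun b => g b * x^b) b0 0.1088 (by norm_num) (by norm_num)
    (fun b => gx_nonneg hx0 b) ?_ M
  · refine h.trans ?_
    have := gx_nonneg hx0 b0
    rw [div_le_iff₀ (by norm_num)] at *
    nlinarith
  · intro b hb
    have hb1 : 1 ≤ b := hb0.trans hb
    have h1 : g (b+1) ≤ 10.88 * g b := g_ratio_ub1 hb1
    have hxp : (0:ℝ) ≤ x^b := by positivity
    have hg1 := g_nonneg (b+1)
    have hg := g_nonneg b
    calc g (b+1) * x^(b+1) = (g (b+1) * x) * x^b := by ring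
      _ ≤ (10.88 * g b * (1/100)) * x^b := by
          apply mul_le_mul_of_nonneg_right _ hxp
          nlinarith
      _ = 0.1088 * (g b * x^b) := by ring

lemma L1' (hx0 : 0 < x) (hx : x ≤ 1/100) (M : ℕ) :
    ∑ b ∈ Finset.Icc 1 M, g b * x^b ≤ 18.31 * x := by
  refine (L1 hx0 hx le_rfl M).trans ?_
  have h1 : g 1 ≤ 16.3098 := g_one_ub
  have hg := g_nonneg 1
  have : g 1 * x^1 ≤ 16.3098 * x := by
    rw [pow_one]; nlinarith
  nlinarith

lemma L2 (b : ℕ) (hb : 1 ≤ b) : ∑ a ∈ Finset.Icc 1 b, g a ≤ 1.23 * g b := by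
  induction b, hb using Nat.le_induction with
  | base => rw [Finset.Icc_self, Finset.sum_singleton]; nlinarith [g_nonneg 1]
  | succ b hb ih =>
    rw [Finset.sum_Icc_succ_top (by omega : 1 ≤ b+1)]
    have h := g_ratio_lb b
    nlinarith [g_nonneg b, g_nonneg (b+1)]

lemma L2' (b : ℕ) (hb : 2 ≤ b) : ∑ a ∈ Finset.Icc 1 b, g a ≤ 1.2263 * g b := by
  obtain ⟨c, rfl⟩ : ∃ c, b = c + 1 := ⟨b-1, by omega⟩
  have hc : 1 ≤ c := by omega
  rw [Finset.sum_Icc_succ_top (by omega : 1 ≤ c+1)]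
  have h := g_ratio_lb c
  have h2 := L2 c hc
  nlinarith [g_nonneg c, g_nonneg (c+1)]

lemma two_e_ub : 2*Real.exp 1 ≤ 5.43657 := by nlinarith [e_ub]
lemma two_e_nonneg : (0:ℝ) ≤ 2*Real.exp 1 := by positivity

lemma g2_sq : g 2 * g 2 ≤ 31449 := by
  have h4 : (2*Real.exp 1)^4 ≤ 5.43657^4 :=
    pow_le_pow_left₀ two_e_nonneg two_e_ub 4
  have : g 2 * g 2 = 36 * (2*Real.exp 1)^4 := by
    simp only [g]; push_cast; ring
  rw [this]; nlinarith

lemma g3_sq : g 3 * g 3 ≤ 2582000 := by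
  have h6 : (2*Real.exp 1)^6 ≤ 5.43657^6 :=
    pow_le_pow_left₀ two_e_nonneg two_e_ub 6
  have : g 3 * g 3 = 100 * (2*Real.exp 1)^6 := by
    simp only [g]; push_cast; ring
  rw [this]; nlinarith

lemma g4_sq : g 4 * g 4 ≤ 171710000 := by
  have h8 : (2*Real.exp 1)^8 ≤ 5.43657^8 :=
    pow_le_pow_left₀ two_e_nonneg two_e_ub 8
  have : g 4 * g 4 = 225 * (2*Real.exp 1)^8 := by
    simp only [g]; push_cast; ring
  rw [this]; nlinarith

lemma L3 (hx0 : 0 < x) (hx : x ≤ 1/100) (M : ℕ) :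
    ∑ b ∈ Finset.Icc 2 M, g b * g b * x^b ≤ 98160 * x^2 := by
  set u : ℕ → ℝ := fun b => g b * g b * x^b with hu
  have hunn : ∀ b, 0 ≤ u b := by
    intro b; have := g_nonneg b; simp only [hu]; positivity
  have htail : ∑ b ∈ Finset.Icc 4 M, u b ≤ u 4 / (1 - 0.58) := by
    apply sum_geom_bound u 4 0.58 (by norm_num) (by norm_num) hunn
    intro b hb
    have h := g_ratio_ub4 hb
    have hg1 := g_nonneg (b+1)
    have hg := g_nonneg b
    have hsq : g (b+1) * g (b+1) ≤ 57.9304 * (g b * g b) := by nlinarith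
    have hxp : (0:ℝ) ≤ x^b := by positivity
    calc u (b+1) = (g (b+1) * g (b+1) * x) * x^b := by simp only [hu]; ring
      _ ≤ (57.9304 * (g b * g b) * (1/100)) * x^b := by
          apply mul_le_mul_of_nonneg_right _ hxp
          nlinarith
      _ ≤ 0.58 * u b := by simp only [hu]; nlinarith
  have hsplit : ∑ b ∈ Finset.Icc 2 M, u b ≤ u 2 + u 3 + ∑ b ∈ Finset.Icc 4 M, u b := by
    rcases le_or_gt M 3 with hM | hM
    · have hsub : ∑ b ∈ Finset.Icc 2 M, u b ≤ ∑ b ∈ Finset.Icc 2 3, u b := by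
        apply Finset.sum_le_sum_of_subset_of_nonneg
        · exact Finset.Icc_subset_Icc_right hM
        · intro i _ _; exact hunn i
      have h23 : ∑ b ∈ Finset.Icc 2 3, u b = u 2 + u 3 := by
        rw [Finset.sum_Icc_succ_top (by omega : 2 ≤ 3), Finset.Icc_self, Finset.sum_singleton]
      have h4 : 0 ≤ ∑ b ∈ Finset.Icc 4 M, u b := Finset.sum_nonneg fun i _ => hunn i
      linarith
    · have h1 : ∑ b ∈ Finset.Ioc 1 3, u b + ∑ b ∈ Finset.Ioc 3 M, u b
          = ∑ b ∈ Finset.Ioc 1 M, u b :=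
        Finset.sum_Ioc_consecutive u (by omega) (by omega)
      have e1 : Finset.Icc 2 M = Finset.Ioc 1 M := Finset.Icc_add_one_left_eq_Ioc 1 M
      have e2 : Finset.Icc 4 M = Finset.Ioc 3 M := Finset.Icc_add_one_left_eq_Ioc 3 M
      have e3 : ∑ b ∈ Finset.Ioc 1 3, u b = u 2 + u 3 := by
        have : Finset.Ioc 1 3 = Finset.Icc 2 3 := (Finset.Icc_add_one_left_eq_Ioc 1 3).symm
        rw [this, Finset.sum_Icc_succ_top (by omega : 2 ≤ 3), Finset.Icc_self,
          Finset.sum_singleton]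
      rw [e1, e2, ← h1, e3]
  have hx2 : x^2 ≤ 1/10000 := by nlinarith
  have hu2 : u 2 ≤ 31449 * x^2 := by
    simp only [hu]
    have := g2_sq
    have hxp : (0:ℝ) ≤ x^2 := by positivity
    nlinarith
  have hu3 : u 3 ≤ 25820 * x^2 := by
    simp only [hu]
    have := g3_sq
    have h3 : x^3 ≤ (1/100) * x^2 := by nlinarith
    have hg := mul_nonneg (g_nonneg 3) (g_nonneg 3)
    have hxp : (0:ℝ) ≤ x^3 := by positivity
    nlinarith
  have hu4 : u 4 / (1-0.58) ≤ 40884 * x^2 := by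
    simp only [hu]
    have := g4_sq
    have h4 : x^4 ≤ (1/10000) * x^2 := by nlinarith [sq_nonneg x, sq_nonneg (x*x)]
    have hg := mul_nonneg (g_nonneg 4) (g_nonneg 4)
    have hxp : (0:ℝ) ≤ x^4 := by positivity
    rw [div_le_iff₀ (by norm_num)]
    nlinarith
  have htail' : ∑ b ∈ Finset.Icc 4 M, u b ≤ 40884 * x^2 := htail.trans hu4
  have : ∑ b ∈ Finset.Icc 2 M, u b ≤ 98160 * x^2 := by linarith [sq_nonneg x]
  exact this

end RankinAux

namespace RankinAux

variable {x : ℝ}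

lemma inner_bound (hx0 : 0 < x) (hx : x ≤ 1/100) {b M : ℕ} (hb1 : 1 ≤ b) (hbM : b ≤ M) :
    ∑ a ∈ Finset.Icc 1 M, g a * g b * x^(max a b)
      ≤ g b * x^b * (∑ a ∈ Finset.Icc 1 b, g a) + 12.21 * x * (g b * g b * x^b) := by
  have hsplit : ∑ a ∈ Finset.Icc 1 M, g a * g b * x^(max a b)
      = ∑ a ∈ Finset.Icc 1 b, g a * g b * x^(max a b)
        + ∑ a ∈ Finset.Icc (b+1) M, g a * g b * x^(max a b) := by
    rw [show Finset.Icc 1 M = Finset.Ioc 0 M from Finset.Icc_add_one_left_eq_Ioc 0 M,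
      show Finset.Icc 1 b = Finset.Ioc 0 b from Finset.Icc_add_one_left_eq_Ioc 0 b,
      show Finset.Icc (b+1) M = Finset.Ioc b M from Finset.Icc_add_one_left_eq_Ioc b M]
    exact (Finset.sum_Ioc_consecutive _ (Nat.zero_le b) hbM).symm
  rw [hsplit]
  have h1 : ∑ a ∈ Finset.Icc 1 b, g a * g b * x^(max a b)
      = g b * x^b * ∑ a ∈ Finset.Icc 1 b, g a := by
    rw [Finset.mul_sum]
    apply Finset.sum_congr rfl
    intro a ha
    have hab : a ≤ b := (Finset.mem_Icc.mp ha).2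
    rw [max_eq_right hab]; ring
  have h2 : ∑ a ∈ Finset.Icc (b+1) M, g a * g b * x^(max a b)
      ≤ 12.21 * x * (g b * g b * x^b) := by
    have e2 : ∑ a ∈ Finset.Icc (b+1) M, g a * g b * x^(max a b)
        = g b * ∑ a ∈ Finset.Icc (b+1) M, g a * x^a := by
      rw [Finset.mul_sum]
      apply Finset.sum_congr rfl
      intro a ha
      have hba : b ≤ a := by have := (Finset.mem_Icc.mp ha).1; omega
      rw [max_eq_left hba]; ring
    rw [e2]
    have htail := L1 hx0 hx (by omega : 1 ≤ b+1) M
    have hrat : g (b+1) ≤ 10.88 * g b := g_ratio_ub1 hb1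
    have hgb := g_nonneg b
    have hgb1 := g_nonneg (b+1)
    have hxb : (0:ℝ) ≤ x^b := by positivity
    have hstep : g (b+1) * x^(b+1) ≤ 10.88 * g b * x * x^b := by
      rw [pow_succ]
      nlinarith [mul_pos hx0 (pow_pos hx0 b)]
    have hsum_nn : 0 ≤ ∑ a ∈ Finset.Icc (b+1) M, g a * x^a :=
      Finset.sum_nonneg fun a _ => gx_nonneg hx0 a
    calc g b * ∑ a ∈ Finset.Icc (b+1) M, g a * x^a
        ≤ g b * (1.1221 * (g (b+1) * x^(b+1))) := by
          apply mul_le_mul_of_nonneg_left htail hgb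
      _ ≤ g b * (1.1221 * (10.88 * g b * x * x^b)) := by
          apply mul_le_mul_of_nonneg_left _ hgb
          nlinarith [mul_nonneg (mul_nonneg (by nlinarith : (0:ℝ) ≤ 10.88 * g b) hx0.le) hxb]
      _ ≤ 12.21 * x * (g b * g b * x^b) := by nlinarith [mul_nonneg (mul_nonneg hgb hgb) (mul_nonneg hx0.le hxb)]
  linarith [h1.le]

set_option maxHeartbeats 1000000 in
theorem local_sum_le (hx0 : 0 < x) (hx : x ≤ 1/100) (M : ℕ) :
    ∑ a ∈ Finset.Icc 0 M, ∑ b ∈ Finset.Icc 0 M, g a * g b * x^(max a b)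
      ≤ Real.exp (400*x) := by
  have hexp : 1 + 400*x + (400*x)^2/2 + (400*x)^3/6 ≤ Real.exp (400*x) := by
    have h := Real.sum_le_exp_of_nonneg (by positivity : (0:ℝ) ≤ 400*x) 4
    have e : ∑ i ∈ Finset.range 4, (400*x)^i / (Nat.factorial i)
        = 1 + 400*x + (400*x)^2/2 + (400*x)^3/6 := by
      rw [Finset.sum_range_succ, Finset.sum_range_succ, Finset.sum_range_succ,
        Finset.sum_range_one]
      norm_num [Nat.factorial]
    rw [e] at h
    exact h
  have h00 : Finset.Icc 0 M = insert 0 (Finset.Icc 1 M) := by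
    rw [show Finset.Icc 1 M = Finset.Ioc 0 M from Finset.Icc_add_one_left_eq_Ioc 0 M]
    exact (Finset.Ioc_insert_left (Nat.zero_le M)).symm
  have h0notin : (0:ℕ) ∉ Finset.Icc 1 M := by simp
  have hins : ∀ f : ℕ → ℝ, ∑ a ∈ Finset.Icc 0 M, f a = f 0 + ∑ a ∈ Finset.Icc 1 M, f a := by
    intro f; rw [h00, Finset.sum_insert h0notin]
  have e1 : ∑ a ∈ Finset.Icc 0 M, ∑ b ∈ Finset.Icc 0 M, g a * g b * x^(max a b)
      = (g 0 * g 0 * x^(max 0 0) + ∑ b ∈ Finset.Icc 1 M, g 0 * g b * x^(max 0 b))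
        + ∑ a ∈ Finset.Icc 1 M,
            (g a * g 0 * x^(max a 0) + ∑ b ∈ Finset.Icc 1 M, g a * g b * x^(max a b)) := by
    rw [hins (fun a => ∑ b ∈ Finset.Icc 0 M, g a * g b * x^(max a b)),
      hins (fun b => g 0 * g b * x^(max 0 b))]
    have := Finset.sum_congr rfl (fun a (_ : a ∈ Finset.Icc 1 M) =>
      hins (fun b => g a * g b * x^(max a b)))
    rw [this]
  have p1 : g 0 * g 0 * x^(max 0 0) = 1 := by simp [g_zero]
  have p2 : ∑ b ∈ Finset.Icc 1 M, g 0 * g b * x^(max 0 b)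
      = ∑ b ∈ Finset.Icc 1 M, g b * x^b := by
    apply Finset.sum_congr rfl
    intro b _
    rw [g_zero, max_eq_right (Nat.zero_le b), one_mul]
  have p3 : ∑ a ∈ Finset.Icc 1 M,
      (g a * g 0 * x^(max a 0) + ∑ b ∈ Finset.Icc 1 M, g a * g b * x^(max a b))
      = ∑ a ∈ Finset.Icc 1 M, g a * x^a
        + ∑ a ∈ Finset.Icc 1 M, ∑ b ∈ Finset.Icc 1 M, g a * g b * x^(max a b) := by
    rw [← Finset.sum_add_distrib]
    apply Finset.sum_congr rfl
    intro a _
    rw [g_zero, max_eq_left (Nat.zero_le a)]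
    ring
  have hL1 := L1' hx0 hx M
  have hcore : ∑ a ∈ Finset.Icc 1 M, ∑ b ∈ Finset.Icc 1 M, g a * g b * x^(max a b)
      ≤ 266.01 * x + 3248.1 * x^2 + 132370 * x^2 := by
    rw [Finset.sum_comm]
    have hper : ∀ b ∈ Finset.Icc 1 M,
        ∑ a ∈ Finset.Icc 1 M, g a * g b * x^(max a b)
          ≤ g b * x^b * (∑ a ∈ Finset.Icc 1 b, g a) + 12.21 * x * (g b * g b * x^b) := by
      intro b hb
      obtain ⟨hb1, hbM⟩ := Finset.mem_Icc.mp hb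
      exact inner_bound hx0 hx hb1 hbM
    refine (Finset.sum_le_sum hper).trans ?_
    rcases Nat.eq_zero_or_pos M with rfl | hM
    · simp
      nlinarith [sq_nonneg x]
    set w : ℕ → ℝ := fun b => g b * x^b * (∑ a ∈ Finset.Icc 1 b, g a)
        + 12.21 * x * (g b * g b * x^b) with hw
    have hsplitb : ∑ b ∈ Finset.Icc 1 M, w b = w 1 + ∑ b ∈ Finset.Icc 2 M, w b := by
      rw [show Finset.Icc 1 M = Finset.Ioc 0 M from Finset.Icc_add_one_left_eq_Ioc 0 M,
        show Finset.Icc 2 M = Finset.Ioc 1 M from Finset.Icc_add_one_left_eq_Ioc 1 M,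
        ← Finset.sum_Ioc_consecutive w (by omega : (0:ℕ) ≤ 1) (by omega : 1 ≤ M)]
      congr 1
      rw [Nat.Ioc_succ_singleton, Finset.sum_singleton]
    have hw1 : w 1 ≤ 266.01 * x + 3248.1 * x^2 := by
      simp only [hw, Finset.Icc_self, Finset.sum_singleton]
      have h1 := g_one_sq_ub
      have hg1 := g_nonneg 1
      have hxx : x^1 = x := pow_one x
      rw [hxx]
      nlinarith [mul_pos hx0 hx0, sq_nonneg x]
    have hwb : ∀ b ∈ Finset.Icc 2 M, w b ≤ 1.3485 * (g b * g b * x^b) := by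
      intro b hb
      obtain ⟨hb2, hbM⟩ := Finset.mem_Icc.mp hb
      simp only [hw]
      have hL2 := L2' b hb2
      have hgb := g_nonneg b
      have hxb : (0:ℝ) ≤ x^b := by positivity
      have hgxb : (0:ℝ) ≤ g b * x^b := by positivity
      have h1 : g b * x^b * (∑ a ∈ Finset.Icc 1 b, g a) ≤ g b * x^b * (1.2263 * g b) :=
        mul_le_mul_of_nonneg_left hL2 hgxb
      have h2 : 12.21 * x * (g b * g b * x^b) ≤ 0.1222 * (g b * g b * x^b) := by
        nlinarith [mul_nonneg (mul_nonneg hgb hgb) hxb]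
      nlinarith
    have hL3 := L3 hx0 hx M
    have hsum2 : ∑ b ∈ Finset.Icc 2 M, w b ≤ 1.3485 * (98160 * x^2) := by
      refine (Finset.sum_le_sum hwb).trans ?_
      rw [← Finset.mul_sum]
      nlinarith
    have hfin : ∑ b ∈ Finset.Icc 1 M, w b ≤ 266.01*x + 3248.1*x^2 + 132370*x^2 := by
      rw [hsplitb]
      nlinarith [sq_nonneg x]
    exact hfin
  rw [e1, p1, p2, p3]
  have hL1b := L1' hx0 hx M
  have htot : (1 + ∑ b ∈ Finset.Icc 1 M, g b * x^b)
      + (∑ a ∈ Finset.Icc 1 M, g a * x^a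
        + ∑ a ∈ Finset.Icc 1 M, ∑ b ∈ Finset.Icc 1 M, g a * g b * x^(max a b))
      ≤ 1 + 302.63*x + 135619*x^2 := by
    linarith [hL1, hcore, sq_nonneg x]
  refine htot.trans ?_
  have key : 302.63*x + 135619*x^2 ≤ 400*x + (400*x)^2/2 + (400*x)^3/6 := by
    nlinarith [mul_nonneg hx0.le (sq_nonneg (x - 0.0026)),
      (mul_le_mul_of_nonneg_left hx hx0.le : x*(x) ≤ x*(1/100)), hx0.le, sq_nonneg x]
  linarith

end RankinAux

namespace RankinAux


/-- the summand. -/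
def Wt (m n : ℕ) : ℝ :=
  (2*Real.exp 1)^(Ω m + Ω n) * (d3 m : ℝ) * (d3 n : ℝ) / (Nat.lcm m n : ℝ)

lemma Wt_nonneg (m n : ℕ) : 0 ≤ Wt m n := by
  unfold Wt
  have h : (0:ℝ) ≤ 2*Real.exp 1 := by positivity
  positivity

lemma d3_eq (n : ℕ) : d3 n = (σ 0 * ζ : ArithmeticFunction ℕ) n := by
  rw [ArithmeticFunction.mul_zeta_apply]
  unfold d3
  exact Finset.sum_congr rfl fun d _ => (ArithmeticFunction.sigma_zero_apply d).symm

lemma d3_mul_coprime {m n : ℕ} (h : Nat.Coprime m n) : d3 (m*n) = d3 m * d3 n := by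
  rw [d3_eq, d3_eq, d3_eq]
  exact (ArithmeticFunction.isMultiplicative_sigma.mul
    ArithmeticFunction.isMultiplicative_zeta).map_mul_of_coprime h

lemma d3_one : d3 1 = 1 := by simp [d3]

lemma d3_prime_pow {p : ℕ} (hp : p.Prime) (a : ℕ) :
    (d3 (p^a) : ℝ) = (((a:ℝ)+1)*((a:ℝ)+2)/2) := by
  have h1 : d3 (p^a) = ∑ i ∈ Finset.range (a+1), (i+1) := by
    unfold d3
    rw [Nat.sum_divisors_prime_pow hp]
    apply Finset.sum_congr rfl
    intro i _
    have := ArithmeticFunction.sigma_zero_apply (p^i)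
    rw [← this, ArithmeticFunction.sigma_zero_apply_prime_pow hp]
  have h2 : ∀ k:ℕ, (∑ i ∈ Finset.range (k+1), ((i:ℝ)+1)) = ((k:ℝ)+1)*((k:ℝ)+2)/2 := by
    intro k
    induction k with
    | zero => norm_num
    | succ k ih =>
      rw [Finset.sum_range_succ, ih]
      push_cast
      ring
  rw [h1]
  push_cast
  exact h2 a

lemma omega_pow_mul {p m : ℕ} (hp : p.Prime) (hm : m ≠ 0) (a : ℕ) :
    Ω (p^a * m) = a + Ω m := by
  rw [ArithmeticFunction.cardFactors_mul (pow_ne_zero a hp.pos.ne') hm,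
    ArithmeticFunction.cardFactors_apply_prime_pow hp]

lemma lcm_decomp {p a b m n : ℕ} (hp : p.Prime) (hm : m ≠ 0) (hn : n ≠ 0)
    (hpm : ¬ p ∣ m) (hpn : ¬ p ∣ n) :
    Nat.lcm (p^a * m) (p^b * n) = p^(max a b) * Nat.lcm m n := by
  have hlcm0 : Nat.lcm m n ≠ 0 := Nat.lcm_ne_zero hm hn
  apply Nat.dvd_antisymm
  · apply Nat.lcm_dvd
    · exact mul_dvd_mul (pow_dvd_pow p (le_max_left a b)) (Nat.dvd_lcm_left m n)
    · exact mul_dvd_mul (pow_dvd_pow p (le_max_right a b)) (Nat.dvd_lcm_right m n)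
  · have hplcm : ¬ p ∣ Nat.lcm m n := by
      intro hd
      have h2 : Nat.lcm m n ∣ m * n := Nat.lcm_dvd_mul m n
      rcases (Nat.Prime.dvd_mul hp).mp (hd.trans h2) with h | h
      · exact hpm h
      · exact hpn h
    have hcop : Nat.Coprime (p^(max a b)) (Nat.lcm m n) :=
      Nat.Coprime.pow_left _ ((Nat.Prime.coprime_iff_not_dvd hp).mpr hplcm)
    apply Nat.Coprime.mul_dvd_of_dvd_of_dvd hcop
    · rcases le_total a b with hab | hab
      · rw [max_eq_right hab]
        exact dvd_trans (dvd_mul_right _ _) (Nat.dvd_lcm_right _ _)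
      · rw [max_eq_left hab]
        exact dvd_trans (dvd_mul_right _ _) (Nat.dvd_lcm_left _ _)
    · apply Nat.lcm_dvd
      · exact dvd_trans (dvd_mul_left m _) (Nat.dvd_lcm_left _ _)
      · exact dvd_trans (dvd_mul_left n _) (Nat.dvd_lcm_right _ _)

lemma Wt_decomp {p a b m n : ℕ} (hp : p.Prime) (hm : m ≠ 0) (hn : n ≠ 0)
    (hpm : ¬ p ∣ m) (hpn : ¬ p ∣ n) :
    Wt (p^a * m) (p^b * n) = (g a * g b * (1/(p:ℝ))^(max a b)) * Wt m n := by
  unfold Wt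
  rw [omega_pow_mul hp hm a, omega_pow_mul hp hn b, lcm_decomp hp hm hn hpm hpn]
  have hcm : Nat.Coprime (p^a) m := Nat.Coprime.pow_left _
    ((Nat.Prime.coprime_iff_not_dvd hp).mpr hpm)
  have hcn : Nat.Coprime (p^b) n := Nat.Coprime.pow_left _
    ((Nat.Prime.coprime_iff_not_dvd hp).mpr hpn)
  rw [d3_mul_coprime hcm, d3_mul_coprime hcn]
  have hp0 : (0:ℝ) < (p:ℝ) := by exact_mod_cast hp.pos
  have hlcm0 : (0:ℝ) < (Nat.lcm m n : ℝ) := by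
    exact_mod_cast Nat.pos_of_ne_zero (Nat.lcm_ne_zero hm hn)
  push_cast
  rw [d3_prime_pow hp a, d3_prime_pow hp b]
  unfold g
  rw [pow_add, pow_add]
  rw [div_pow, one_pow]
  field_simp
  ring

end RankinAux

namespace RankinAux


lemma main_ind : ∀ (S : Finset ℕ), (∀ p ∈ S, p.Prime ∧ 100 ≤ p) →
    ∀ t : Finset (ℕ×ℕ),
      (∀ mn ∈ t, 0 < mn.1 ∧ 0 < mn.2 ∧
        ∀ q : ℕ, q.Prime → (q ∣ mn.1 ∨ q ∣ mn.2) → q ∈ S) →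
      ∑ mn ∈ t, Wt mn.1 mn.2 ≤ ∏ p ∈ S, Real.exp (400 / (p:ℝ)) := by
  intro S
  induction S using Finset.induction_on with
  | empty =>
    intro _ t ht
    simp only [Finset.prod_empty]
    have hsub : t ⊆ {((1,1) : ℕ×ℕ)} := by
      intro mn hmn
      obtain ⟨h1, h2, h3⟩ := ht mn hmn
      have hm1 : mn.1 = 1 := by
        by_contra h
        obtain ⟨q, hq, hqd⟩ := Nat.exists_prime_and_dvd h
        exact absurd (h3 q hq (Or.inl hqd)) (Finset.notMem_empty q)
      have hn1 : mn.2 = 1 := by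
        by_contra h
        obtain ⟨q, hq, hqd⟩ := Nat.exists_prime_and_dvd h
        exact absurd (h3 q hq (Or.inr hqd)) (Finset.notMem_empty q)
      rw [Finset.mem_singleton]
      exact Prod.ext hm1 hn1
    calc ∑ mn ∈ t, Wt mn.1 mn.2 ≤ ∑ mn ∈ ({((1,1):ℕ×ℕ)} : Finset (ℕ×ℕ)), Wt mn.1 mn.2 :=
        Finset.sum_le_sum_of_subset_of_nonneg hsub (fun i _ _ => Wt_nonneg i.1 i.2)
      _ = Wt 1 1 := Finset.sum_singleton _ _
      _ ≤ 1 := by unfold Wt; simp [d3_one]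
  | @insert p S' hpS' IH =>
    intro hS t ht
    have hp : p.Prime := (hS p (Finset.mem_insert_self p S')).1
    have hp100 : 100 ≤ p := (hS p (Finset.mem_insert_self p S')).2
    set θ : ℕ×ℕ → (ℕ×ℕ)×(ℕ×ℕ) := fun mn =>
      ((mn.1.factorization p, mn.2.factorization p),
       (mn.1 / p^(mn.1.factorization p), mn.2 / p^(mn.2.factorization p))) with hθ
    have hrec : ∀ mn : ℕ×ℕ,
        mn.1 = p^((θ mn).1.1) * (θ mn).2.1 ∧ mn.2 = p^((θ mn).1.2) * (θ mn).2.2 := by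
      intro mn
      constructor <;> exact (Nat.ordProj_mul_ordCompl_eq_self _ p).symm
    have hinj : ∀ mn ∈ t, ∀ mn' ∈ t, θ mn = θ mn' → mn = mn' := by
      intro mn _ mn' _ heq
      obtain ⟨e1, e2⟩ := hrec mn
      obtain ⟨e1', e2'⟩ := hrec mn'
      have c1 := congrArg (fun q => q.1.1) heq
      have c2 := congrArg (fun q => q.1.2) heq
      have c3 := congrArg (fun q => q.2.1) heq
      have c4 := congrArg (fun q => q.2.2) heq
      simp only [hθ] at c1 c2 c3 c4
      apply Prod.ext
      · rw [e1, e1']; simp only [hθ]; rw [c3, c1]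
      · rw [e2, e2']; simp only [hθ]; rw [c4, c2]
    have hWt : ∀ mn ∈ t, Wt mn.1 mn.2
        = (g (θ mn).1.1 * g (θ mn).1.2 * (1/(p:ℝ))^(max (θ mn).1.1 (θ mn).1.2))
          * Wt (θ mn).2.1 (θ mn).2.2 := by
      intro mn hmn
      obtain ⟨h1, h2, _⟩ := ht mn hmn
      obtain ⟨e1, e2⟩ := hrec mn
      conv_lhs => rw [e1, e2]
      exact Wt_decomp hp (Nat.ordCompl_pos p h1.ne').ne' (Nat.ordCompl_pos p h2.ne').ne'
        (Nat.not_dvd_ordCompl hp h1.ne') (Nat.not_dvd_ordCompl hp h2.ne')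
    have himg : ∑ mn ∈ t, Wt mn.1 mn.2 = ∑ q ∈ t.image θ,
        (g q.1.1 * g q.1.2 * (1/(p:ℝ))^(max q.1.1 q.1.2)) * Wt q.2.1 q.2.2 := by
      rw [Finset.sum_image hinj]
      exact Finset.sum_congr rfl hWt
    have hp0 : (0:ℝ) < (p:ℝ) := by exact_mod_cast hp.pos
    have hLnn : ∀ u : ℕ×ℕ, 0 ≤ g u.1 * g u.2 * (1/(p:ℝ))^(max u.1 u.2) := by
      intro u
      have h1 := g_nonneg u.1
      have h2 := g_nonneg u.2
      positivity
    have hsub : t.image θ ⊆ ((t.image θ).image Prod.fst) ×ˢ ((t.image θ).image Prod.snd) := by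
      intro q hq
      rw [Finset.mem_product]
      exact ⟨Finset.mem_image_of_mem _ hq, Finset.mem_image_of_mem _ hq⟩
    have hle1 : ∑ q ∈ t.image θ,
        (g q.1.1 * g q.1.2 * (1/(p:ℝ))^(max q.1.1 q.1.2)) * Wt q.2.1 q.2.2
        ≤ ∑ q ∈ ((t.image θ).image Prod.fst) ×ˢ ((t.image θ).image Prod.snd),
            (g q.1.1 * g q.1.2 * (1/(p:ℝ))^(max q.1.1 q.1.2)) * Wt q.2.1 q.2.2 :=
      Finset.sum_le_sum_of_subset_of_nonneg hsub
        (fun q _ _ => mul_nonneg (hLnn q.1) (Wt_nonneg q.2.1 q.2.2))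
    have hprod : ∑ q ∈ ((t.image θ).image Prod.fst) ×ˢ ((t.image θ).image Prod.snd),
          (g q.1.1 * g q.1.2 * (1/(p:ℝ))^(max q.1.1 q.1.2)) * Wt q.2.1 q.2.2
        = (∑ u ∈ (t.image θ).image Prod.fst, g u.1 * g u.2 * (1/(p:ℝ))^(max u.1 u.2))
          * (∑ v ∈ (t.image θ).image Prod.snd, Wt v.1 v.2) := by
      rw [Finset.sum_mul_sum]
      rw [Finset.sum_product]
    have hA : (∑ u ∈ (t.image θ).image Prod.fst, g u.1 * g u.2 * (1/(p:ℝ))^(max u.1 u.2))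
        ≤ Real.exp (400/(p:ℝ)) := by
      have hx0 : (0:ℝ) < 1/(p:ℝ) := by positivity
      have hx : 1/(p:ℝ) ≤ 1/100 := by
        apply one_div_le_one_div_of_le
        · norm_num
        · exact_mod_cast hp100
      set A := (t.image θ).image Prod.fst with hAdef
      set M := A.sup (fun u => max u.1 u.2) with hM
      have hsubA : A ⊆ Finset.Icc 0 M ×ˢ Finset.Icc 0 M := by
        intro u hu
        have hle : max u.1 u.2 ≤ M := Finset.le_sup (f := fun u => max u.1 u.2) hu
        rw [Finset.mem_product, Finset.mem_Icc, Finset.mem_Icc]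
        omega
      calc ∑ u ∈ A, g u.1 * g u.2 * (1/(p:ℝ))^(max u.1 u.2)
          ≤ ∑ u ∈ Finset.Icc 0 M ×ˢ Finset.Icc 0 M,
              g u.1 * g u.2 * (1/(p:ℝ))^(max u.1 u.2) :=
            Finset.sum_le_sum_of_subset_of_nonneg hsubA (fun u _ _ => hLnn u)
        _ = ∑ a ∈ Finset.Icc 0 M, ∑ b ∈ Finset.Icc 0 M,
              g a * g b * (1/(p:ℝ))^(max a b) := by rw [Finset.sum_product]
        _ ≤ Real.exp (400*(1/(p:ℝ))) := local_sum_le hx0 hx M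
        _ = Real.exp (400/(p:ℝ)) := by rw [mul_one_div]
    have hB : (∑ v ∈ (t.image θ).image Prod.snd, Wt v.1 v.2)
        ≤ ∏ p' ∈ S', Real.exp (400/(p':ℝ)) := by
      apply IH (fun p' hp' => hS p' (Finset.mem_insert_of_mem hp'))
      intro v hv
      obtain ⟨q, hq, hqv⟩ := Finset.mem_image.mp hv
      obtain ⟨mn, hmn, hmnq⟩ := Finset.mem_image.mp hq
      obtain ⟨h1, h2, h3⟩ := ht mn hmn
      subst hmnq
      subst hqv
      refine ⟨Nat.ordCompl_pos p h1.ne', Nat.ordCompl_pos p h2.ne', ?_⟩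
      intro q hq hdvd
      have hqp : q ≠ p := by
        rintro rfl
        rcases hdvd with h | h
        · exact Nat.not_dvd_ordCompl hp h1.ne' h
        · exact Nat.not_dvd_ordCompl hp h2.ne' h
      have hqin : q ∈ insert p S' := by
        apply h3 q hq
        rcases hdvd with h | h
        · exact Or.inl (h.trans (Nat.ordCompl_dvd mn.1 p))
        · exact Or.inr (h.trans (Nat.ordCompl_dvd mn.2 p))
      rcases Finset.mem_insert.mp hqin with h | h
      · exact absurd h hqp
      · exact h
    have hBnn : 0 ≤ ∑ v ∈ (t.image θ).image Prod.snd, Wt v.1 v.2 :=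
      Finset.sum_nonneg (fun v _ => Wt_nonneg v.1 v.2)
    rw [Finset.prod_insert hpS']
    calc ∑ mn ∈ t, Wt mn.1 mn.2
        = ∑ q ∈ t.image θ,
            (g q.1.1 * g q.1.2 * (1/(p:ℝ))^(max q.1.1 q.1.2)) * Wt q.2.1 q.2.2 := himg
      _ ≤ _ := hle1
      _ = _ := hprod
      _ ≤ Real.exp (400/(p:ℝ)) * ∏ p' ∈ S', Real.exp (400/(p':ℝ)) := by
          apply mul_le_mul hA hB hBnn (Real.exp_nonneg _)

end RankinAux



/-- There is an absolute constant `C` such that for `100 ≤ P ≤ Q`,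
`Σ_{m,n : p ∣ mn → P ≤ p < Q} (2e)^{Ω(m)+Ω(n)} d₃(m) d₃(n) / [m,n]
  ≤ C exp(400 Σ_{P ≤ p < Q} 1/p)`. -/
theorem rankin_double_sum_bound :
    ∃ C : ℝ, ∀ P Q : ℝ, 100 ≤ P → P ≤ Q →
      (∑' mn : ℕ × ℕ,
          if 0 < mn.1 ∧ 0 < mn.2
              ∧ (∀ p : ℕ, p.Prime → p ∣ mn.1 → (P ≤ (p:ℝ) ∧ (p:ℝ) < Q))
              ∧ (∀ p : ℕ, p.Prime → p ∣ mn.2 → (P ≤ (p:ℝ) ∧ (p:ℝ) < Q))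
          then (2*Real.exp 1)^(Ω mn.1 + Ω mn.2) * (d3 mn.1 : ℝ) * (d3 mn.2 : ℝ)
                 / (Nat.lcm mn.1 mn.2 : ℝ)
          else 0)
        ≤ C * Real.exp (400 * primeRecipSum P Q) := by
  classical
  use 1
  intro P Q hP hPQ
  set S := (Finset.range (⌈Q⌉₊ + 1)).filter
    (fun p : ℕ => p.Prime ∧ P ≤ (p:ℝ) ∧ (p:ℝ) < Q) with hSdef
  have hprodS : Real.exp (400 * primeRecipSum P Q) = ∏ p ∈ S, Real.exp (400 / (p:ℝ)) := by
    rw [primeRecipSum, ← hSdef, Finset.mul_sum, ← Real.exp_sum]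
    congr 1
    exact Finset.sum_congr rfl fun p _ => by rw [mul_one_div]
  have hS' : ∀ p ∈ S, p.Prime ∧ 100 ≤ p := by
    intro p hp
    rw [hSdef, Finset.mem_filter] at hp
    obtain ⟨_, hprime, hPp, _⟩ := hp
    refine ⟨hprime, ?_⟩
    have : (100:ℝ) ≤ (p:ℝ) := le_trans hP hPp
    exact_mod_cast this
  by_cases hsum : Summable (fun mn : ℕ × ℕ =>
      if 0 < mn.1 ∧ 0 < mn.2
          ∧ (∀ p : ℕ, p.Prime → p ∣ mn.1 → (P ≤ (p:ℝ) ∧ (p:ℝ) < Q))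
          ∧ (∀ p : ℕ, p.Prime → p ∣ mn.2 → (P ≤ (p:ℝ) ∧ (p:ℝ) < Q))
      then (2*Real.exp 1)^(Ω mn.1 + Ω mn.2) * (d3 mn.1 : ℝ) * (d3 mn.2 : ℝ)
             / (Nat.lcm mn.1 mn.2 : ℝ)
      else 0)
  · rw [one_mul, hprodS]
    apply Summable.tsum_le_of_sum_le hsum
    intro s
    rw [← Finset.sum_filter]
    have harg : ∀ mn ∈ s.filter (fun mn : ℕ×ℕ => 0 < mn.1 ∧ 0 < mn.2
          ∧ (∀ p : ℕ, p.Prime → p ∣ mn.1 → (P ≤ (p:ℝ) ∧ (p:ℝ) < Q))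
          ∧ (∀ p : ℕ, p.Prime → p ∣ mn.2 → (P ≤ (p:ℝ) ∧ (p:ℝ) < Q))),
        0 < mn.1 ∧ 0 < mn.2 ∧
          ∀ q : ℕ, q.Prime → (q ∣ mn.1 ∨ q ∣ mn.2) → q ∈ S := by
      intro mn hmn
      rw [Finset.mem_filter] at hmn
      obtain ⟨_, h1, h2, h3, h4⟩ := hmn
      refine ⟨h1, h2, ?_⟩
      intro q hq hdvd
      have hPQq : P ≤ (q:ℝ) ∧ (q:ℝ) < Q := by
        rcases hdvd with h | h
        · exact h3 q hq h
        · exact h4 q hq h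
      rw [hSdef, Finset.mem_filter, Finset.mem_range]
      refine ⟨?_, hq, hPQq.1, hPQq.2⟩
      have hqQ : (q:ℝ) ≤ (⌈Q⌉₊ : ℝ) := le_trans hPQq.2.le (Nat.le_ceil Q)
      have : q ≤ ⌈Q⌉₊ := by exact_mod_cast hqQ
      omega
    exact RankinAux.main_ind S hS' _ harg
  · rw [tsum_eq_zero_of_not_summable hsum, one_mul]
    positivity
end
end
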